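/- arXiv:gr-qc/0006035 — 6 statements merged into one kernel-verified Lean document; each statement's English description precedes it below -/
import Mathlib

section
/- Let 2/3 < γ < 2. There exist ε > 0 and a constant c_γ > 0 depending only on γ such that the following holds for every Bianchi type IX solution of the Wainwright–Hsu system and every interval [τ₁, τ₂] contained in its existence interval: if N₁N₂ + N₂N₃ + N₁N₃ ≤ ε on all of [τ₁, τ₂] and Ω(τ₂) ≤ ε, then Ω(τ) ≤ c_γ·Ω(τ₂) for all τ ∈ [τ₁, τ₂]. -/
set_option maxHeartbeats 2000000


open Real Filter Topology Set

noncomputable section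

namespace WainwrightHsu

/-- The deceleration parameter `q` of the Wainwright–Hsu system. -/
def qf (γ O Sp Sm : ℝ) : ℝ := (1/2) * (3*γ - 2) * O + 2 * (Sp^2 + Sm^2)

/-- The curvature term `S₊`. -/
def SPf (n1 n2 n3 : ℝ) : ℝ := (1/2) * ((n2 - n3)^2 - n1 * (2*n1 - n2 - n3))

/-- The curvature term `S₋`. -/
def SMf (n1 n2 n3 : ℝ) : ℝ := (Real.sqrt 3 / 2) * (n3 - n2) * (n1 - n2 - n3)

/-- The Hamiltonian constraint. -/
def Constraint (O Sp Sm n1 n2 n3 : ℝ) : Prop :=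
  O + Sp^2 + Sm^2 + (3/4) * (n1^2 + n2^2 + n3^2 - 2*(n1*n2 + n2*n3 + n3*n1)) = 1

/-- `(O, Sp, Sm, n1, n2, n3)` is a solution of the Wainwright–Hsu system (with
parameter `γ`) on the set `s ⊆ ℝ`, satisfying `Ω ≥ 0` and the constraint. -/
structure SolOn (γ : ℝ) (s : Set ℝ) (O Sp Sm n1 n2 n3 : ℝ → ℝ) : Prop where
  hn1 : ∀ τ ∈ s, HasDerivAt n1 ((qf γ (O τ) (Sp τ) (Sm τ) - 4 * Sp τ) * n1 τ) τ
  hn2 : ∀ τ ∈ s, HasDerivAt n2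
    ((qf γ (O τ) (Sp τ) (Sm τ) + 2 * Sp τ + 2 * Real.sqrt 3 * Sm τ) * n2 τ) τ
  hn3 : ∀ τ ∈ s, HasDerivAt n3
    ((qf γ (O τ) (Sp τ) (Sm τ) + 2 * Sp τ - 2 * Real.sqrt 3 * Sm τ) * n3 τ) τ
  hSp : ∀ τ ∈ s, HasDerivAt Sp
    (-(2 - qf γ (O τ) (Sp τ) (Sm τ)) * Sp τ - 3 * SPf (n1 τ) (n2 τ) (n3 τ)) τ
  hSm : ∀ τ ∈ s, HasDerivAt Sm
    (-(2 - qf γ (O τ) (Sp τ) (Sm τ)) * Sm τ - 3 * SMf (n1 τ) (n2 τ) (n3 τ)) τ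
  hO : ∀ τ ∈ s, HasDerivAt O ((2 * qf γ (O τ) (Sp τ) (Sm τ) - (3*γ - 2)) * O τ) τ
  hOnn : ∀ τ ∈ s, 0 ≤ O τ
  hcon : ∀ τ ∈ s, Constraint (O τ) (Sp τ) (Sm τ) (n1 τ) (n2 τ) (n3 τ)

/-- The solution is of Taub type. -/
def TaubType (s : Set ℝ) (Sp Sm n1 n2 n3 : ℝ → ℝ) : Prop :=
  (∀ τ ∈ s, Sm τ = 0 ∧ n2 τ = n3 τ) ∨
  (∀ τ ∈ s, Sm τ = -(Real.sqrt 3) * Sp τ ∧ n1 τ = n2 τ) ∨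
  (∀ τ ∈ s, Sm τ = Real.sqrt 3 * Sp τ ∧ n3 τ = n1 τ)

/-- The solution converges to the fixed point `F` as `τ → -∞`. -/
def TendstoF (O Sp Sm n1 n2 n3 : ℝ → ℝ) : Prop :=
  Tendsto O atBot (𝓝 1) ∧ Tendsto Sp atBot (𝓝 0) ∧ Tendsto Sm atBot (𝓝 0) ∧
  Tendsto n1 atBot (𝓝 0) ∧ Tendsto n2 atBot (𝓝 0) ∧ Tendsto n3 atBot (𝓝 0)

/-- The solution converges to the fixed point `P₁⁺(II)` as `τ → -∞`. -/
def TendstoP1 (γ : ℝ) (O Sp Sm n1 n2 n3 : ℝ → ℝ) : Prop :=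
  Tendsto O atBot (𝓝 (1 - (3*γ - 2)/16)) ∧
  Tendsto Sp atBot (𝓝 ((3*γ - 2)/8)) ∧ Tendsto Sm atBot (𝓝 0) ∧
  (∃ c : ℝ, 0 < c ∧ Tendsto n1 atBot (𝓝 c)) ∧
  Tendsto n2 atBot (𝓝 0) ∧ Tendsto n3 atBot (𝓝 0)

/-- The solution converges to the fixed point `P₂⁺(II)` as `τ → -∞`. -/
def TendstoP2 (γ : ℝ) (O Sp Sm n1 n2 n3 : ℝ → ℝ) : Prop :=
  Tendsto O atBot (𝓝 (1 - (3*γ - 2)/16)) ∧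
  Tendsto Sp atBot (𝓝 (-((3*γ - 2)/16))) ∧
  Tendsto Sm atBot (𝓝 (-(Real.sqrt 3 * (3*γ - 2)/16))) ∧
  Tendsto n1 atBot (𝓝 0) ∧
  (∃ c : ℝ, 0 < c ∧ Tendsto n2 atBot (𝓝 c)) ∧ Tendsto n3 atBot (𝓝 0)

/-- The solution converges to the fixed point `P₃⁺(II)` as `τ → -∞`. -/
def TendstoP3 (γ : ℝ) (O Sp Sm n1 n2 n3 : ℝ → ℝ) : Prop :=
  Tendsto O atBot (𝓝 (1 - (3*γ - 2)/16)) ∧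
  Tendsto Sp atBot (𝓝 (-((3*γ - 2)/16))) ∧
  Tendsto Sm atBot (𝓝 (Real.sqrt 3 * (3*γ - 2)/16)) ∧
  Tendsto n1 atBot (𝓝 0) ∧ Tendsto n2 atBot (𝓝 0) ∧
  (∃ c : ℝ, 0 < c ∧ Tendsto n3 atBot (𝓝 c))

/-- A Bianchi IX solution is generic if it is not of Taub type and does not
converge to `F` nor to any of the `Pᵢ⁺(II)` as `τ → -∞`. -/
def Generic (γ : ℝ) (s : Set ℝ) (O Sp Sm n1 n2 n3 : ℝ → ℝ) : Prop :=
  ¬ TaubType s Sp Sm n1 n2 n3 ∧ ¬ TendstoF O Sp Sm n1 n2 n3 ∧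
  ¬ TendstoP1 γ O Sp Sm n1 n2 n3 ∧ ¬ TendstoP2 γ O Sp Sm n1 n2 n3 ∧
  ¬ TendstoP3 γ O Sp Sm n1 n2 n3

/-- `(a, b, c, d, e, f)` is an α-limit point of the solution:
some sequence of times tending to `-∞` along which the solution converges to it. -/
def AlphaLim (O Sp Sm n1 n2 n3 : ℝ → ℝ) (a b c d e f : ℝ) : Prop :=
  ∃ τs : ℕ → ℝ, Tendsto τs atTop atBot ∧
    Tendsto (fun k => O (τs k)) atTop (𝓝 a) ∧
    Tendsto (fun k => Sp (τs k)) atTop (𝓝 b) ∧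
    Tendsto (fun k => Sm (τs k)) atTop (𝓝 c) ∧
    Tendsto (fun k => n1 (τs k)) atTop (𝓝 d) ∧
    Tendsto (fun k => n2 (τs k)) atTop (𝓝 e) ∧
    Tendsto (fun k => n3 (τs k)) atTop (𝓝 f)

/-- ω-limit point (times tending to `+∞`). -/
def OmegaLim (O Sp Sm n1 n2 n3 : ℝ → ℝ) (a b c d e f : ℝ) : Prop :=
  ∃ τs : ℕ → ℝ, Tendsto τs atTop atTop ∧
    Tendsto (fun k => O (τs k)) atTop (𝓝 a) ∧
    Tendsto (fun k => Sp (τs k)) atTop (𝓝 b) ∧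
    Tendsto (fun k => Sm (τs k)) atTop (𝓝 c) ∧
    Tendsto (fun k => n1 (τs k)) atTop (𝓝 d) ∧
    Tendsto (fun k => n2 (τs k)) atTop (𝓝 e) ∧
    Tendsto (fun k => n3 (τs k)) atTop (𝓝 f)

/-- α-limit point, phrased for a point of `ℝ⁶` (in coordinates `Ω, Σ₊, Σ₋, N₁, N₂, N₃`). -/
def AlphaLimPt (O Sp Sm n1 n2 n3 : ℝ → ℝ) (p : Fin 6 → ℝ) : Prop :=
  ∃ τs : ℕ → ℝ, Tendsto τs atTop atBot ∧
    Tendsto (fun k =>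
      (![O (τs k), Sp (τs k), Sm (τs k), n1 (τs k), n2 (τs k), n3 (τs k)] : Fin 6 → ℝ))
      atTop (𝓝 p)

/-- A non-special point of the Kasner circle, given by its `(Σ₊, Σ₋)` coordinates. -/
def NonSpecialKasner (a b : ℝ) : Prop :=
  a^2 + b^2 = 1 ∧ (a, b) ≠ (-1, 0) ∧
  (a, b) ≠ (1/2, Real.sqrt 3 / 2) ∧ (a, b) ≠ (1/2, -(Real.sqrt 3) / 2)

/-- The state vector of a solution, as a point of Euclidean `ℝ⁶`. -/
def stateVec (O Sp Sm n1 n2 n3 : ℝ → ℝ) (τ : ℝ) : EuclideanSpace ℝ (Fin 6) :=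
  (WithLp.equiv 2 (Fin 6 → ℝ)).symm ![O τ, Sp τ, Sm τ, n1 τ, n2 τ, n3 τ]

/-- The Bianchi attractor `𝒜`: the closure of the vacuum type I and II points, i.e. the
points of `ℝ⁶` satisfying the constraint with `Ω = 0` and `N₁N₂ = N₂N₃ = N₃N₁ = 0`. -/
def attractor : Set (EuclideanSpace ℝ (Fin 6)) :=
  {y | Constraint (y 0) (y 1) (y 2) (y 3) (y 4) (y 5) ∧
    y 0 = 0 ∧ y 3 * y 4 = 0 ∧ y 4 * y 5 = 0 ∧ y 5 * y 3 = 0}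




lemma prod_lb (c y M Y : ℝ) (hc0 : 0 ≤ c) (hcM : c ≤ M) (hyL : -Y ≤ y) (hY : 0 ≤ Y) :
    -(M*Y) ≤ c*y := by
  rcases le_or_gt 0 y with h | h
  · have h1 : 0 ≤ c*y := mul_nonneg hc0 h
    have h2 : 0 ≤ M*Y := mul_nonneg (hc0.trans hcM) hY
    linarith
  · have h1 : M*y ≤ c*y := mul_le_mul_of_nonpos_right hcM h.le
    have h2 : M*(-Y) ≤ M*y := mul_le_mul_of_nonneg_left hyL (hc0.trans hcM)
    nlinarith

lemma small_term (g s q a b w : ℝ) (hg : 0 < g) (hg4 : g ≤ 4) (hs : s = g/15000)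
    (haL : -(11/10) ≤ a) (haU : a ≤ 11/10) (hbL : -17 ≤ b) (hbU : b ≤ 17)
    (hq0 : 0 ≤ q) (hq2 : q ≤ 21/10)
    (hw0 : 0 < w) (hws : w ≤ g/20000) :
    -(g/100) ≤ 5*(-(2-q)*a + b)*w + (5*a+11)*(2*s*(q-4*a))*w := by
  have hqa : (2-q)*a ≤ 22/10 := by nlinarith
  have hqa' : -(22/10) ≤ (2-q)*a := by nlinarith
  have h1 : 5*(-(2-q)*a + b)*w ≥ -(97*w) := by nlinarith
  have hs0 : 0 ≤ s := by rw [hs]; positivity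
  have hsU : s ≤ 4/15000 := by rw [hs]; linarith
  have hcw0 : 0 ≤ (5*a+11)*w := by nlinarith
  have hcwM : (5*a+11)*w ≤ 33/2 * (g/20000) := by nlinarith
  have hyL : -(13*s) ≤ 2*s*(q-4*a) := by nlinarith
  have h2 : -((33/2*(g/20000))*(13*s)) ≤ ((5*a+11)*w)*(2*s*(q-4*a)) :=
    prod_lb _ _ _ _ hcw0 hcwM hyL (by positivity)
  have h3 : (5*a+11)*(2*s*(q-4*a))*w = ((5*a+11)*w)*(2*s*(q-4*a)) := by ring
  rw [h3]
  nlinarith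

lemma core (g s q a b w x t2 t3 F : ℝ)
    (hg : 0 < g) (hg4 : g ≤ 4) (hs : s = g/15000)
    (hx0 : 0 ≤ x) (hx : x ≤ 27/20)
    (haL : -(11/10) ≤ a) (haU : a ≤ 11/10)
    (hq0 : 0 ≤ q) (hq2 : q ≤ 21/10)
    (hqL : 3/2*x - g/100 ≤ 2 - q) (hqU : 2 - q ≤ 3/2*x + g/100)
    (hb : 3*x - g/100 ≤ b)
    (hw0 : 0 < w) (hw2 : w ≤ 2) (hwb : g/12 ≤ x → 1/2 ≤ w)
    (ht2 : -(g/100) ≤ t2) (ht3 : -(g/100) ≤ t3)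
    (hF : g - 3*x - g/100 ≤ F) :
    0 ≤ F + (5*(-(2-q)*a + b)*w + (5*a+11)*(2*s*(q-4*a))*w)
        + t2 + t3 := by
  have hs0 : 0 ≤ s := by rw [hs]; positivity
  have hsU : s ≤ 4/15000 := by rw [hs]; linarith
  have hA : 3/2*x*(2-a) - 22*g/1000 ≤ -(2-q)*a + b := by
    rcases le_or_gt 0 a with h | h
    · nlinarith
    · nlinarith
  have h5 : 5*(3/2*x*(2-a))*w - 22*g/100 ≤ 5*(-(2-q)*a + b)*w := by nlinarith
  have hcw0 : 0 ≤ (5*a+11)*w := by nlinarith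
  have hcwM : (5*a+11)*w ≤ 33 := by nlinarith
  have hyL : -(13*s) ≤ 2*s*(q-4*a) := by nlinarith
  have h2 : -(33*(13*s)) ≤ ((5*a+11)*w)*(2*s*(q-4*a)) :=
    prod_lb _ _ _ _ hcw0 hcwM hyL (by positivity)
  have hsec : -(g/30) ≤ (5*a+11)*(2*s*(q-4*a))*w := by
    have h3 : (5*a+11)*(2*s*(q-4*a))*w = ((5*a+11)*w)*(2*s*(q-4*a)) := by ring
    rw [h3]; linarith
  rcases le_or_gt x (g/12) with hc | hc
  · have hq1 : 0 ≤ x*(2-a) := mul_nonneg hx0 (by linarith)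
    have hpos : 0 ≤ 5*(3/2*x*(2-a))*w := by nlinarith
    linarith
  · have hw : 1/2 ≤ w := hwb (le_of_lt hc)
    have hcw : 9/20 ≤ (2-a)*w := by nlinarith
    have hbonus : 27/8*x ≤ 5*(3/2*x*(2-a))*w := by nlinarith [mul_le_mul_of_nonneg_left hcw hx0]
    linarith

section keyfacts

lemma root_bound (u : ℝ) (h0 : 0 < u) (h : u^2 ≤ 27/20) : u ≤ 7/6 := by nlinarith

lemma interval_of_sq (p : ℝ) (h : p^2 ≤ 101/100) : -(11/10) ≤ p ∧ p ≤ 11/10 := by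
  constructor <;> nlinarith

lemma a2_sq (r p m : ℝ) (hr : r^2 = 3) : (-(p+r*m)/2)^2 ≤ p^2+m^2 := by
  nlinarith [sq_nonneg (r*p - m)]

lemma a3_sq (r p m : ℝ) (hr : r^2 = 3) : ((-p+r*m)/2)^2 ≤ p^2+m^2 := by
  nlinarith [sq_nonneg (r*p + m)]

lemma gw_bound (g ω : ℝ) (hg : 0 < g) (hg4 : g ≤ 4) (hω0 : 0 ≤ ω) (hωθ : ω ≤ g/1000) :
    g*ω ≤ g/250 := by nlinarith

lemma sq_le_eps (ud u eps P : ℝ) (hud : 0 < ud) (hu : 0 < u) (hle : u ≤ ud)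
    (hprod : u*ud ≤ P) (hP : P ≤ eps) : u^2 ≤ eps := by nlinarith

lemma Bd_lower (g ud u v eps : ℝ) (hg : 0 < g) (hud : 0 < ud) (hu : 0 < u) (hv : 0 < v)
    (hue : ud*u ≤ eps) (hve : ud*v ≤ eps) (hu2 : u^2 ≤ eps) (hv2 : v^2 ≤ eps)
    (heps : eps ≤ g/10000) :
    3*ud^2 - g/100 ≤ 3*ud^2 - 3/2*(u-v)^2 - 3/2*ud*(u+v) := by
  nlinarith [mul_pos hu hv]

lemma B_bounds (a b c : ℝ) (ha : 0 < a) (hb : 0 < b) (hc : 0 < c)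
    (ha2 : a^2 ≤ 27/20) (hb2 : b^2 ≤ 27/20) (hc2 : c^2 ≤ 27/20)
    (haU : a ≤ 7/6) (hbU : b ≤ 7/6) (hcU : c ≤ 7/6) :
    -17 ≤ 3*a^2 - 3/2*(b-c)^2 - 3/2*a*(b+c) ∧ 3*a^2 - 3/2*(b-c)^2 - 3/2*a*(b+c) ≤ 17 := by
  constructor
  · nlinarith [sq_nonneg (b-c), mul_pos ha hb, mul_pos ha hc]
  · nlinarith [sq_nonneg (b-c), mul_pos ha hb, mul_pos ha hc]

end keyfacts

/-- The central pointwise inequality. -/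
lemma key (γ s q dp dm p m u1 u2 u3 ω w1 w2 w3 eps : ℝ)
    (hγ1 : 2/3 < γ) (hγ2 : γ < 2) (hs : s = (6-3*γ)/15000)
    (hq : q = 1/2*(3*γ-2)*ω + 2*(p^2+m^2))
    (hdp : dp = -(2-q)*p - 3*((1/2)*((u2-u3)^2 - u1*(2*u1-u2-u3))))
    (hdm : dm = -(2-q)*m - 3*((Real.sqrt 3/2)*(u3-u2)*(u1-u2-u3)))
    (hu1 : 0 < u1) (hu2 : 0 < u2) (hu3 : 0 < u3)
    (hω0 : 0 ≤ ω) (hωθ : ω ≤ (6-3*γ)/1000)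
    (hcon : ω + (p^2+m^2) + 3/4*(u1^2+u2^2+u3^2 - 2*(u1*u2+u2*u3+u1*u3)) = 1)
    (heps : eps ≤ (6-3*γ)/10000)
    (hP : u1*u2 + u2*u3 + u1*u3 ≤ eps)
    (hw1p : 0 < w1) (hw2p : 0 < w2) (hw3p : 0 < w3)
    (hw12 : w1 ≤ 2) (hw22 : w2 ≤ 2) (hw32 : w3 ≤ 2)
    (hw1s : u1^2 ≤ eps → w1 ≤ (6-3*γ)/20000)
    (hw2s : u2^2 ≤ eps → w2 ≤ (6-3*γ)/20000)
    (hw3s : u3^2 ≤ eps → w3 ≤ (6-3*γ)/20000)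
    (hw1b : (6-3*γ)/12 ≤ u1^2 → 1/2 ≤ w1)
    (hw2b : (6-3*γ)/12 ≤ u2^2 → 1/2 ≤ w2)
    (hw3b : (6-3*γ)/12 ≤ u3^2 → 1/2 ≤ w3) :
    0 ≤ (2*q - (3*γ-2))
      + (5*dp*w1 + (5*p+11)*(2*s*(q-4*p))*w1)
      + (5*(-(dp + Real.sqrt 3*dm)/2)*w2
          + (5*(-(p+Real.sqrt 3*m)/2)+11)*(2*s*(q-4*(-(p+Real.sqrt 3*m)/2)))*w2)
      + (5*((-dp + Real.sqrt 3*dm)/2)*w3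
          + (5*((-p+Real.sqrt 3*m)/2)+11)*(2*s*(q-4*((-p+Real.sqrt 3*m)/2)))*w3) := by
  have hg : 0 < 6-3*γ := by linarith
  have hg4 : 6-3*γ ≤ 4 := by linarith
  set g : ℝ := 6-3*γ with hgdef
  set r : ℝ := Real.sqrt 3 with hrdef
  have hr : r^2 = 3 := Real.sq_sqrt (by norm_num)
  have hm2 : (0:ℝ) ≤ m^2 := sq_nonneg m
  have hp2 : (0:ℝ) ≤ p^2 := sq_nonneg p
  set a2 : ℝ := -(p+r*m)/2 with ha2def
  set a3 : ℝ := (-p+r*m)/2 with ha3def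
  set B1 : ℝ := 3*u1^2 - 3/2*(u2-u3)^2 - 3/2*u1*(u2+u3) with hB1def
  set B2 : ℝ := 3*u2^2 - 3/2*(u1-u3)^2 - 3/2*u2*(u1+u3) with hB2def
  set B3 : ℝ := 3*u3^2 - 3/2*(u1-u2)^2 - 3/2*u3*(u1+u2) with hB3def
  -- basic bounds (mostly via the auxiliary lemmas, keeping contexts small)
  have hsq1 : (0:ℝ) ≤ u1^2 := sq_nonneg u1
  have hsq2 : (0:ℝ) ≤ u2^2 := sq_nonneg u2
  have hsq3 : (0:ℝ) ≤ u3^2 := sq_nonneg u3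
  have hσ0 : (0:ℝ) ≤ p^2+m^2 := by positivity
  have m12 : 0 < u1*u2 := mul_pos hu1 hu2
  have m23 : 0 < u2*u3 := mul_pos hu2 hu3
  have m13 : 0 < u1*u3 := mul_pos hu1 hu3
  have hepsU : eps ≤ 1/2500 := by linarith
  have hσ : p^2+m^2 ≤ 101/100 := by linarith
  obtain ⟨hpL, hpU⟩ := interval_of_sq p (by linarith)
  obtain ⟨ha2L, ha2U⟩ := interval_of_sq a2 (by
    have := a2_sq r p m hr
    rw [← ha2def] at this; linarith)
  obtain ⟨ha3L, ha3U⟩ := interval_of_sq a3 (by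
    have := a3_sq r p m hr
    rw [← ha3def] at this; linarith)
  have hgω : 0 ≤ g/2*ω := by positivity
  have hgωU : g*ω ≤ g/250 := gw_bound g ω hg hg4 hω0 hωθ
  have hqid : q = 2 - 3/2*(u1^2+u2^2+u3^2) - g/2*ω + 3*(u1*u2+u2*u3+u1*u3) := by
    rw [hq, hgdef]; linarith [hcon]
  have hq0 : 0 ≤ q := by
    have h1 : 0 ≤ 1/2*(3*γ-2)*ω := by
      have := mul_nonneg (by linarith : (0:ℝ) ≤ 1/2*(3*γ-2)) hω0
      linarith
    rw [hq]; linarith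
  have hq2 : q ≤ 21/10 := by rw [hqid]; linarith
  have hx1 : u1^2 ≤ 27/20 := by linarith
  have hx2 : u2^2 ≤ 27/20 := by linarith
  have hx3 : u3^2 ≤ 27/20 := by linarith
  have hu1U : u1 ≤ 7/6 := root_bound u1 hu1 hx1
  have hu2U : u2 ≤ 7/6 := root_bound u2 hu2 hx2
  have hu3U : u3 ≤ 7/6 := root_bound u3 hu3 hx3
  obtain ⟨hB1L, hB1U⟩ := B_bounds u1 u2 u3 hu1 hu2 hu3 hx1 hx2 hx3 hu1U hu2U hu3U
  obtain ⟨hB2L, hB2U⟩ := B_bounds u2 u1 u3 hu2 hu1 hu3 hx2 hx1 hx3 hu2U hu1U hu3U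
  obtain ⟨hB3L, hB3U⟩ := B_bounds u3 u1 u2 hu3 hu1 hu2 hx3 hx1 hx2 hu3U hu1U hu2U
  have hI1 : 5*dp*w1 + (5*p+11)*(2*s*(q-4*p))*w1
      = 5*(-(2-q)*p + B1)*w1 + (5*p+11)*(2*s*(q-4*p))*w1 := by
    rw [hdp, hB1def]; ring
  have hI2 : 5*(-(dp + r*dm)/2)*w2 + (5*(-(p+r*m)/2)+11)*(2*s*(q-4*(-(p+r*m)/2)))*w2
      = 5*(-(2-q)*a2 + B2)*w2 + (5*a2+11)*(2*s*(q-4*a2))*w2 := by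
    rw [hdp, hdm, ha2def, hB2def]
    linear_combination (15/4*w2*(u3-u2)*(u1-u2-u3)) * hr
  have hI3 : 5*((-dp + r*dm)/2)*w3 + (5*((-p+r*m)/2)+11)*(2*s*(q-4*((-p+r*m)/2)))*w3
      = 5*(-(2-q)*a3 + B3)*w3 + (5*a3+11)*(2*s*(q-4*a3))*w3 := by
    rw [hdp, hdm, ha3def, hB3def]
    linear_combination (-(15/4)*w3*(u3-u2)*(u1-u2-u3)) * hr
  rw [hI1, hI2, hI3]
  clear hI1 hI2 hI3 hdp hdm hq hcon hσ0
  have hsg : s = g/15000 := by rw [hs, hgdef]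
  have hepsg : eps ≤ g/10000 := heps
  rcases le_total u2 u1 with hA | hA
  · rcases le_total u3 u1 with hB | hB
    · -- u1 dominant
      have hsm2 : u2^2 ≤ eps := sq_le_eps u1 u2 eps _ hu1 hu2 hA (by linarith) hP
      have hsm3 : u3^2 ≤ eps := sq_le_eps u1 u3 eps _ hu1 hu3 hB (by linarith) hP
      have ht2 := small_term g s q a2 B2 w2 hg hg4 hsg ha2L ha2U hB2L hB2U hq0 hq2 hw2p
        (hw2s hsm2)
      have ht3 := small_term g s q a3 B3 w3 hg hg4 hsg ha3L ha3U hB3L hB3U hq0 hq2 hw3p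
        (hw3s hsm3)
      have hqL : 3/2*u1^2 - g/100 ≤ 2 - q := by rw [hqid]; linarith
      have hqU : 2 - q ≤ 3/2*u1^2 + g/100 := by rw [hqid]; linarith
      have hb : 3*u1^2 - g/100 ≤ B1 := by
        rw [hB1def]
        exact Bd_lower g u1 u2 u3 eps hg hu1 hu2 hu3 (by linarith) (by linarith) hsm2 hsm3 hepsg
      have hF : g - 3*u1^2 - g/100 ≤ 2*q - (3*γ-2) := by rw [hqid]; linarith
      exact (core g s q p B1 w1 (u1^2) _ _ _ hg hg4 hsg hsq1 hx1 hpL hpU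
        hq0 hq2 hqL hqU hb hw1p hw12 hw1b ht2 ht3 hF).trans_eq (by ring)
    · -- u3 dominant (u2 ≤ u1 ≤ u3)
      have hsm1 : u1^2 ≤ eps := sq_le_eps u3 u1 eps _ hu3 hu1 hB (by linarith) hP
      have hsm2 : u2^2 ≤ eps := sq_le_eps u3 u2 eps _ hu3 hu2 (hA.trans hB) (by linarith) hP
      have ht1 := small_term g s q p B1 w1 hg hg4 hsg hpL hpU hB1L hB1U hq0 hq2 hw1p
        (hw1s hsm1)
      have ht2 := small_term g s q a2 B2 w2 hg hg4 hsg ha2L ha2U hB2L hB2U hq0 hq2 hw2p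
        (hw2s hsm2)
      have hqL : 3/2*u3^2 - g/100 ≤ 2 - q := by rw [hqid]; linarith
      have hqU : 2 - q ≤ 3/2*u3^2 + g/100 := by rw [hqid]; linarith
      have hb : 3*u3^2 - g/100 ≤ B3 := by
        rw [hB3def]
        exact Bd_lower g u3 u1 u2 eps hg hu3 hu1 hu2 (by linarith) (by linarith) hsm1 hsm2 hepsg
      have hF : g - 3*u3^2 - g/100 ≤ 2*q - (3*γ-2) := by rw [hqid]; linarith
      exact (core g s q a3 B3 w3 (u3^2) _ _ _ hg hg4 hsg hsq3 hx3 ha3L ha3U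
        hq0 hq2 hqL hqU hb hw3p hw32 hw3b ht1 ht2 hF).trans_eq (by ring)
  · rcases le_total u3 u2 with hB | hB
    · -- u2 dominant
      have hsm1 : u1^2 ≤ eps := sq_le_eps u2 u1 eps _ hu2 hu1 hA (by linarith) hP
      have hsm3 : u3^2 ≤ eps := sq_le_eps u2 u3 eps _ hu2 hu3 hB (by linarith) hP
      have ht1 := small_term g s q p B1 w1 hg hg4 hsg hpL hpU hB1L hB1U hq0 hq2 hw1p
        (hw1s hsm1)
      have ht3 := small_term g s q a3 B3 w3 hg hg4 hsg ha3L ha3U hB3L hB3U hq0 hq2 hw3p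
        (hw3s hsm3)
      have hqL : 3/2*u2^2 - g/100 ≤ 2 - q := by rw [hqid]; linarith
      have hqU : 2 - q ≤ 3/2*u2^2 + g/100 := by rw [hqid]; linarith
      have hb : 3*u2^2 - g/100 ≤ B2 := by
        rw [hB2def]
        exact Bd_lower g u2 u1 u3 eps hg hu2 hu1 hu3 (by linarith) (by linarith) hsm1 hsm3 hepsg
      have hF : g - 3*u2^2 - g/100 ≤ 2*q - (3*γ-2) := by rw [hqid]; linarith
      exact (core g s q a2 B2 w2 (u2^2) _ _ _ hg hg4 hsg hsq2 hx2 ha2L ha2U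
        hq0 hq2 hqL hqU hb hw2p hw22 hw2b ht1 ht3 hF).trans_eq (by ring)
    · -- u3 dominant
      have hsm1 : u1^2 ≤ eps := sq_le_eps u3 u1 eps _ hu3 hu1 (hA.trans hB) (by linarith) hP
      have hsm2 : u2^2 ≤ eps := sq_le_eps u3 u2 eps _ hu3 hu2 hB (by linarith) hP
      have ht1 := small_term g s q p B1 w1 hg hg4 hsg hpL hpU hB1L hB1U hq0 hq2 hw1p
        (hw1s hsm1)
      have ht2 := small_term g s q a2 B2 w2 hg hg4 hsg ha2L ha2U hB2L hB2U hq0 hq2 hw2p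
        (hw2s hsm2)
      have hqL : 3/2*u3^2 - g/100 ≤ 2 - q := by rw [hqid]; linarith
      have hqU : 2 - q ≤ 3/2*u3^2 + g/100 := by rw [hqid]; linarith
      have hb : 3*u3^2 - g/100 ≤ B3 := by
        rw [hB3def]
        exact Bd_lower g u3 u1 u2 eps hg hu3 hu1 hu2 (by linarith) (by linarith) hsm1 hsm2 hepsg
      have hF : g - 3*u3^2 - g/100 ≤ 2*q - (3*γ-2) := by rw [hqid]; linarith
      exact (core g s q a3 B3 w3 (u3^2) _ _ _ hg hg4 hsg hsq3 hx3 ha3L ha3U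
        hq0 hq2 hqL hqU hb hw3p hw32 hw3b ht1 ht2 hF).trans_eq (by ring)




/-- All needed facts about the weight `w = exp(2 s log u)`. -/
lemma w_facts (g u : ℝ) (hg : 0 < g) (hg4 : g ≤ 4) (hu : 0 < u) :
    0 < exp (2*(g/15000)*log u)
    ∧ (u^2 ≤ 2 → exp (2*(g/15000)*log u) ≤ 2)
    ∧ (g/12 ≤ u^2 → 1/2 ≤ exp (2*(g/15000)*log u))
    ∧ (u^2 ≤ exp (-(20000 + log (1/g)) * (15000/g)) →
        exp (2*(g/15000)*log u) ≤ g/20000) := by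
  have hu2 : (0:ℝ) < u^2 := by positivity
  have hlog2 : (2:ℝ)*(g/15000)*log u = (g/15000) * log (u^2) := by
    rw [show u^2 = u^2 from rfl, sq, Real.log_mul hu.ne' hu.ne']; ring
  have hs0 : (0:ℝ) < g/15000 := by positivity
  refine ⟨exp_pos _, ?_, ?_, ?_⟩
  · intro h
    have h1 : log (u^2) ≤ u^2 - 1 := Real.log_le_sub_one_of_pos hu2
    have h2 : (g/15000) * log (u^2) ≤ (g/15000) * 1 := by
      rcases le_or_gt (log (u^2)) 1 with hc | hc
      · exact mul_le_mul_of_nonneg_left hc hs0.le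
      · nlinarith
    have h3 : (g/15000) * 1 ≤ log 2 := by
      have : (1:ℝ)/2 ≤ log 2 := by
        have := Real.log_le_sub_one_of_pos (by norm_num : (0:ℝ) < 1/2)
        have hl : log (1/2) = - log 2 := by
          rw [one_div, Real.log_inv]
        rw [hl] at this; linarith
      linarith
    calc exp (2*(g/15000)*log u) ≤ exp (log 2) := by
          rw [hlog2]; exact exp_le_exp.2 (h2.trans h3)
      _ = 2 := Real.exp_log (by norm_num)
  · intro h
    have hg12 : (0:ℝ) < g/12 := by positivity
    have h1 : log (g/12) ≤ log (u^2) := Real.log_le_log hg12 h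
    have h2 : log (12/g) ≤ 12/g - 1 := Real.log_le_sub_one_of_pos (by positivity)
    have h3 : log (g/12) = - log (12/g) := by
      rw [← Real.log_inv]; norm_num
    have h4 : -(12/g) ≤ log (g/12) := by rw [h3]; linarith
    have h5 : (g/15000) * (-(12/g)) ≤ (g/15000) * log (u^2) := by
      exact mul_le_mul_of_nonneg_left (h4.trans h1) hs0.le
    have h6 : (g/15000) * (-(12/g)) = -(12/15000) := by field_simp
    have h7 : -(1:ℝ)/2 ≤ -(12/15000) := by norm_num
    have h8 : 1 - (1:ℝ)/2 ≤ exp (-(1/2)) := by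
      have := Real.add_one_le_exp (-(1:ℝ)/2); linarith
    calc (1:ℝ)/2 ≤ exp (-(1/2)) := by linarith
      _ ≤ exp (2*(g/15000)*log u) := by
          rw [hlog2]; exact exp_le_exp.2 (by linarith)
  · intro h
    have hE : (0:ℝ) < exp (-(20000 + log (1/g)) * (15000/g)) := exp_pos _
    have h1 : log (u^2) ≤ log (exp (-(20000 + log (1/g)) * (15000/g))) :=
      Real.log_le_log hu2 h
    rw [Real.log_exp] at h1
    have h2 : (g/15000) * log (u^2) ≤ (g/15000) * (-(20000 + log (1/g)) * (15000/g)) :=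
      mul_le_mul_of_nonneg_left h1 hs0.le
    have h3 : (g/15000) * (-(20000 + log (1/g)) * (15000/g)) = -(20000 + log (1/g)) := by
      field_simp
    have h4 : exp (-(20000 + log (1/g))) = exp (-20000) * g := by
      rw [show -(20000 + log (1/g)) = -20000 + log g by
        rw [one_div, Real.log_inv]; ring]
      rw [Real.exp_add, Real.exp_log hg]
    have h5 : exp (-(20000:ℝ)) ≤ 1/20000 := by
      have h6 : (20000:ℝ) ≤ exp 20000 := by
        have := Real.add_one_le_exp (20000:ℝ); linarith
      have h7 : (1:ℝ)/exp 20000 ≤ 1/20000 :=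
        one_div_le_one_div_of_le (by norm_num) h6
      calc exp (-(20000:ℝ)) = 1/exp 20000 := by rw [Real.exp_neg, one_div]
        _ ≤ 1/20000 := h7
    calc exp (2*(g/15000)*log u) ≤ exp (-(20000 + log (1/g))) := by
          rw [hlog2]; exact exp_le_exp.2 (by linarith)
      _ = exp (-20000) * g := h4
      _ ≤ (1/20000) * g := by
          exact mul_le_mul_of_nonneg_right h5 hg.le
      _ = g/20000 := by ring


-- new auxiliary lemmas for the glue
lemma con_bounds (ω p m u1 u2 u3 eps : ℝ) (hω : 0 ≤ ω)
    (hu1 : 0 < u1) (hu2 : 0 < u2) (hu3 : 0 < u3)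
    (hcon : ω + (p^2+m^2) + 3/4*(u1^2+u2^2+u3^2 - 2*(u1*u2+u2*u3+u1*u3)) = 1)
    (hP : u1*u2+u2*u3+u1*u3 ≤ eps) (heps : eps ≤ 1/2500) :
    p^2+m^2 ≤ 101/100 ∧ u1^2 ≤ 2 ∧ u2^2 ≤ 2 ∧ u3^2 ≤ 2 := by
  have s1 := sq_nonneg u1; have s2 := sq_nonneg u2; have s3 := sq_nonneg u3
  have sp := sq_nonneg p; have sm := sq_nonneg m
  have m1 := mul_pos hu1 hu2; have m2 := mul_pos hu2 hu3; have m3 := mul_pos hu1 hu3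
  exact ⟨by linarith, by linarith, by linarith, by linarith⟩

lemma hsum_bound (r p m w1 w2 w3 : ℝ) (hr : r^2 = 3)
    (hσ : p^2 + m^2 ≤ 101/100)
    (hw1 : 0 < w1) (hw2 : 0 < w2) (hw3 : 0 < w3)
    (h1 : w1 ≤ 2) (h2 : w2 ≤ 2) (h3 : w3 ≤ 2) :
    0 ≤ (5*p+11)*w1 + (5*(-(p+r*m)/2)+11)*w2 + (5*((-p+r*m)/2)+11)*w3 ∧
      (5*p+11)*w1 + (5*(-(p+r*m)/2)+11)*w2 + (5*((-p+r*m)/2)+11)*w3 ≤ 102 := by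
  obtain ⟨hpL, hpU⟩ := interval_of_sq p (by nlinarith [sq_nonneg m])
  obtain ⟨h2L, h2U⟩ := interval_of_sq _ ((a2_sq r p m hr).trans hσ)
  obtain ⟨h3L, h3U⟩ := interval_of_sq _ ((a3_sq r p m hr).trans hσ)
  have t1a : 0 ≤ (5*p+11)*w1 := by nlinarith
  have t2a : 0 ≤ (5*(-(p+r*m)/2)+11)*w2 := by nlinarith
  have t3a : 0 ≤ (5*((-p+r*m)/2)+11)*w3 := by nlinarith
  have t1b : (5*p+11)*w1 ≤ 33 := by nlinarith
  have t2b : (5*(-(p+r*m)/2)+11)*w2 ≤ 33 := by nlinarith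
  have t3b : (5*((-p+r*m)/2)+11)*w3 ≤ 33 := by nlinarith
  constructor <;> linarith


/-- control over the density parameter.  There are `ε > 0` and `c_γ > 0`
depending only on `γ` such that on any interval where `N₁N₂ + N₂N₃ + N₁N₃ ≤ ε` and
`Ω(τ₂) ≤ ε`, one has `Ω ≤ c_γ · Ω(τ₂)` throughout the interval. -/
theorem density_parameter_control
    (γ : ℝ) (hγ1 : 2/3 < γ) (hγ2 : γ < 2) :
    ∃ ε > (0:ℝ), ∃ c > (0:ℝ), ∀ (O Sp Sm n1 n2 n3 : ℝ → ℝ) (τ₁ τ₂ : ℝ), τ₁ ≤ τ₂ →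
      SolOn γ (Set.Icc τ₁ τ₂) O Sp Sm n1 n2 n3 →
      (∀ τ ∈ Set.Icc τ₁ τ₂, 0 < n1 τ ∧ 0 < n2 τ ∧ 0 < n3 τ) →
      (∀ τ ∈ Set.Icc τ₁ τ₂, n1 τ * n2 τ + n2 τ * n3 τ + n1 τ * n3 τ ≤ ε) →
      O τ₂ ≤ ε →
      ∀ τ ∈ Set.Icc τ₁ τ₂, O τ ≤ c * O τ₂ := by
  have hg : (0:ℝ) < 6-3*γ := by linarith
  have hg4 : (6:ℝ)-3*γ ≤ 4 := by linarith
  refine ⟨min (min ((6-3*γ)/10000) (Real.exp (-(20000 + Real.log (1/(6-3*γ))) * (15000/(6-3*γ)))))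
      ((6-3*γ)/(2000*Real.exp 250)), lt_min (lt_min (by positivity) (exp_pos _)) (by positivity),
    Real.exp 250, exp_pos _, ?_⟩
  set g : ℝ := 6-3*γ with hgdef
  set εv : ℝ := min (min (g/10000) (Real.exp (-(20000 + Real.log (1/g)) * (15000/g))))
      (g/(2000*Real.exp 250)) with hεdef
  intro O Sp Sm n1 n2 n3 τ₁ τ₂ hτ12 sol hpos hprod hO2
  have hεg : εv ≤ g/10000 := (min_le_left _ _).trans (min_le_left _ _)
  have hεE : εv ≤ Real.exp (-(20000 + Real.log (1/g)) * (15000/g)) :=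
    (min_le_left _ _).trans (min_le_right _ _)
  have hεθ : εv ≤ (g/1000)/(2*Real.exp 250) := by
    have h := min_le_right (min (g/10000) (Real.exp (-(20000 + Real.log (1/g)) * (15000/g))))
      (g/(2000*Real.exp 250))
    calc εv ≤ g/(2000*Real.exp 250) := h
      _ = (g/1000)/(2*Real.exp 250) := by ring
  have hε2500 : εv ≤ 1/2500 := by
    have : g/10000 ≤ 1/2500 := by rw [hgdef]; linarith
    linarith
  have hexp1 : (1:ℝ) ≤ Real.exp 250 := by
    have := Real.add_one_le_exp (250:ℝ); linarith
  -- the weight functions and the Lyapunov-type function uf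
  set sg : ℝ := g/15000 with hsgdef
  set w1f : ℝ → ℝ := fun t => Real.exp (2*sg*Real.log (n1 t)) with hw1fdef
  set w2f : ℝ → ℝ := fun t => Real.exp (2*sg*Real.log (n2 t)) with hw2fdef
  set w3f : ℝ → ℝ := fun t => Real.exp (2*sg*Real.log (n3 t)) with hw3fdef
  set hh : ℝ → ℝ := fun t =>
    (5*Sp t+11)*w1f t + (5*(-(Sp t+Real.sqrt 3*Sm t)/2)+11)*w2f t
      + (5*((-Sp t+Real.sqrt 3*Sm t)/2)+11)*w3f t with hhdef
  set uf : ℝ → ℝ := fun t => O t * Real.exp (hh t) with hufdef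
  -- pointwise constraint-based bounds
  have hcmem : ∀ τ ∈ Set.Icc τ₁ τ₂,
      (Sp τ)^2+(Sm τ)^2 ≤ 101/100 ∧ (n1 τ)^2 ≤ 2 ∧ (n2 τ)^2 ≤ 2 ∧ (n3 τ)^2 ≤ 2 := by
    intro τ hτ
    obtain ⟨h1, h2, h3⟩ := hpos τ hτ
    have hc := sol.hcon τ hτ
    unfold Constraint at hc
    refine con_bounds _ _ _ _ _ _ εv (sol.hOnn τ hτ) h1 h2 h3 (by linarith) ?_ hε2500
    · have := hprod τ hτ; linarith
  -- weight bounds at points of the interval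
  have hwf : ∀ τ ∈ Set.Icc τ₁ τ₂,
      (0 < w1f τ ∧ w1f τ ≤ 2 ∧ ((n1 τ)^2 ≤ εv → w1f τ ≤ g/20000) ∧ (g/12 ≤ (n1 τ)^2 → 1/2 ≤ w1f τ))
      ∧ (0 < w2f τ ∧ w2f τ ≤ 2 ∧ ((n2 τ)^2 ≤ εv → w2f τ ≤ g/20000) ∧ (g/12 ≤ (n2 τ)^2 → 1/2 ≤ w2f τ))
      ∧ (0 < w3f τ ∧ w3f τ ≤ 2 ∧ ((n3 τ)^2 ≤ εv → w3f τ ≤ g/20000) ∧ (g/12 ≤ (n3 τ)^2 → 1/2 ≤ w3f τ)) := by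
    intro τ hτ
    obtain ⟨h1, h2, h3⟩ := hpos τ hτ
    obtain ⟨hq, hx1, hx2, hx3⟩ := hcmem τ hτ
    obtain ⟨p1, p2, p3, p4⟩ := w_facts g (n1 τ) hg hg4 h1
    obtain ⟨q1, q2, q3, q4⟩ := w_facts g (n2 τ) hg hg4 h2
    obtain ⟨r1, r2, r3, r4⟩ := w_facts g (n3 τ) hg hg4 h3
    exact ⟨⟨p1, p2 hx1, fun h => p4 (h.trans hεE), p3⟩,
      ⟨q1, q2 hx2, fun h => q4 (h.trans hεE), q3⟩,
      ⟨r1, r2 hx3, fun h => r4 (h.trans hεE), r3⟩⟩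
  -- bounds for hh
  have hhb : ∀ τ ∈ Set.Icc τ₁ τ₂, 0 ≤ hh τ ∧ hh τ ≤ 102 := by
    intro τ hτ
    obtain ⟨⟨a1, a2, _, _⟩, ⟨b1, b2, _, _⟩, ⟨c1, c2, _, _⟩⟩ := hwf τ hτ
    have hσ := (hcmem τ hτ).1
    have hr : (Real.sqrt 3)^2 = 3 := Real.sq_sqrt (by norm_num)
    exact hsum_bound (Real.sqrt 3) (Sp τ) (Sm τ) (w1f τ) (w2f τ) (w3f τ) hr hσ a1 b1 c1 a2 b2 c2
  -- the derivative of uf, with sign information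
  have hdiff : ∀ τ ∈ Set.Icc τ₁ τ₂, ∃ d, HasDerivAt uf d τ ∧ (O τ ≤ g/1000 → 0 ≤ d) := by
    intro τ hτ
    obtain ⟨h1, h2, h3⟩ := hpos τ hτ
    have hl1 : HasDerivAt (fun t => Real.log (n1 t))
        (qf γ (O τ) (Sp τ) (Sm τ) - 4*Sp τ) τ := by
      have h := (sol.hn1 τ hτ).log h1.ne'
      convert h using 1
      field_simp
    have hl2 : HasDerivAt (fun t => Real.log (n2 t))
        (qf γ (O τ) (Sp τ) (Sm τ) + 2*Sp τ + 2*Real.sqrt 3*Sm τ) τ := by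
      have h := (sol.hn2 τ hτ).log h2.ne'
      convert h using 1
      field_simp
    have hl3 : HasDerivAt (fun t => Real.log (n3 t))
        (qf γ (O τ) (Sp τ) (Sm τ) + 2*Sp τ - 2*Real.sqrt 3*Sm τ) τ := by
      have h := (sol.hn3 τ hτ).log h3.ne'
      convert h using 1
      field_simp
    have hw1 : HasDerivAt w1f
        (w1f τ * (2*sg*(qf γ (O τ) (Sp τ) (Sm τ) - 4*Sp τ))) τ := by
      have h := (hl1.const_mul (2*sg)).exp
      rw [hw1fdef]
      convert h using 1
      try ring
    have hw2 : HasDerivAt w2f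
        (w2f τ * (2*sg*(qf γ (O τ) (Sp τ) (Sm τ) + 2*Sp τ + 2*Real.sqrt 3*Sm τ))) τ := by
      have h := (hl2.const_mul (2*sg)).exp
      rw [hw2fdef]
      convert h using 1
      try ring
    have hw3 : HasDerivAt w3f
        (w3f τ * (2*sg*(qf γ (O τ) (Sp τ) (Sm τ) + 2*Sp τ - 2*Real.sqrt 3*Sm τ))) τ := by
      have h := (hl3.const_mul (2*sg)).exp
      rw [hw3fdef]
      convert h using 1
      try ring
    have hc1 : HasDerivAt (fun t => 5*Sp t + 11)
        (5*(-(2 - qf γ (O τ) (Sp τ) (Sm τ)) * Sp τ - 3 * SPf (n1 τ) (n2 τ) (n3 τ))) τ :=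
      ((sol.hSp τ hτ).const_mul 5).add_const 11
    have hc2 : HasDerivAt (fun t => 5*(-(Sp t+Real.sqrt 3*Sm t)/2) + 11)
        (5*(-((-(2 - qf γ (O τ) (Sp τ) (Sm τ)) * Sp τ - 3 * SPf (n1 τ) (n2 τ) (n3 τ))
            + Real.sqrt 3*(-(2 - qf γ (O τ) (Sp τ) (Sm τ)) * Sm τ - 3 * SMf (n1 τ) (n2 τ) (n3 τ)))/2)) τ :=
      by
        have hd2a := (((sol.hSp τ hτ).add ((sol.hSm τ hτ).const_mul (Real.sqrt 3))).neg).div_const 2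
        exact (hd2a.const_mul 5).add_const 11
    have hc3 : HasDerivAt (fun t => 5*((-Sp t+Real.sqrt 3*Sm t)/2) + 11)
        (5*((-(-(2 - qf γ (O τ) (Sp τ) (Sm τ)) * Sp τ - 3 * SPf (n1 τ) (n2 τ) (n3 τ))
            + Real.sqrt 3*(-(2 - qf γ (O τ) (Sp τ) (Sm τ)) * Sm τ - 3 * SMf (n1 τ) (n2 τ) (n3 τ)))/2)) τ :=
      by
        have hd3a := ((((sol.hSp τ hτ).neg).add ((sol.hSm τ hτ).const_mul (Real.sqrt 3))).div_const 2)
        exact (hd3a.const_mul 5).add_const 11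
    have hT1 := hc1.mul hw1
    have hT2 := hc2.mul hw2
    have hT3 := hc3.mul hw3
    have hhder := (hT1.add hT2).add hT3
    have hud : HasDerivAt uf _ τ := (sol.hO τ hτ).mul hhder.exp
    refine ⟨_, hud, ?_⟩
    intro hOθ
    obtain ⟨⟨a1, a2, a3s, a4⟩, ⟨b1, b2, b3s, b4⟩, ⟨c1, c2, c3s, c4⟩⟩ := hwf τ hτ
    have hcon' : O τ + ((Sp τ)^2+(Sm τ)^2)
        + 3/4*((n1 τ)^2+(n2 τ)^2+(n3 τ)^2 - 2*(n1 τ*n2 τ+n2 τ*n3 τ+n1 τ*n3 τ)) = 1 := by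
      have hc := sol.hcon τ hτ
      unfold Constraint at hc
      linarith
    have hkey := key γ sg (qf γ (O τ) (Sp τ) (Sm τ))
      (-(2 - qf γ (O τ) (Sp τ) (Sm τ)) * Sp τ - 3 * SPf (n1 τ) (n2 τ) (n3 τ))
      (-(2 - qf γ (O τ) (Sp τ) (Sm τ)) * Sm τ - 3 * SMf (n1 τ) (n2 τ) (n3 τ))
      (Sp τ) (Sm τ) (n1 τ) (n2 τ) (n3 τ) (O τ) (w1f τ) (w2f τ) (w3f τ) εv
      hγ1 hγ2 (by rw [hsgdef, hgdef]) (by unfold qf; ring)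
      (by unfold SPf; ring) (by unfold SMf; ring)
      h1 h2 h3 (sol.hOnn τ hτ) (by rw [← hgdef]; exact hOθ) hcon'
      (by rw [← hgdef]; exact hεg) (hprod τ hτ)
      a1 b1 c1 a2 b2 c2
      (by rw [← hgdef]; exact a3s) (by rw [← hgdef]; exact b3s) (by rw [← hgdef]; exact c3s)
      (by rw [← hgdef]; exact a4) (by rw [← hgdef]; exact b4) (by rw [← hgdef]; exact c4)
    have hO0 := sol.hOnn τ hτ
    have hnn := mul_nonneg (mul_nonneg (exp_pos (hh τ)).le hO0) hkey
    exact le_trans hnn (le_of_eq (by simp only [hhdef, Pi.mul_apply, Pi.add_apply]; ring))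
  -- the key lemma for intervals on which O stays small
  have hKL : ∀ ρ ∈ Set.Icc τ₁ τ₂, (∀ σ' ∈ Set.Icc ρ τ₂, O σ' ≤ g/1000) →
      ∀ σ' ∈ Set.Icc ρ τ₂, O σ' ≤ Real.exp 250 * O τ₂ := by
    intro ρ hρ hsm σ' hσ'
    have hsub : Set.Icc ρ τ₂ ⊆ Set.Icc τ₁ τ₂ := Set.Icc_subset_Icc hρ.1 le_rfl
    have hmono : MonotoneOn uf (Set.Icc ρ τ₂) := by
      apply monotoneOn_of_deriv_nonneg (convex_Icc ρ τ₂)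
      · intro t ht
        exact ((hdiff t (hsub ht)).choose_spec.1).continuousAt.continuousWithinAt
      · intro t ht
        rw [interior_Icc] at ht
        exact ((hdiff t (hsub (Set.Ioo_subset_Icc_self ht))).choose_spec.1).differentiableAt.differentiableWithinAt
      · intro t ht
        rw [interior_Icc] at ht
        have h := hdiff t (hsub (Set.Ioo_subset_Icc_self ht))
        rw [h.choose_spec.1.deriv]
        exact h.choose_spec.2 (hsm t (Set.Ioo_subset_Icc_self ht))
    have hτ₂m : τ₂ ∈ Set.Icc ρ τ₂ := Set.right_mem_Icc.2 hρ.2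
    have h1 : uf σ' ≤ uf τ₂ := hmono hσ' hτ₂m hσ'.2
    have hOσnn := sol.hOnn σ' (hsub hσ')
    have hOτ₂nn := sol.hOnn τ₂ (Set.right_mem_Icc.2 hτ12)
    have hb1 := hhb σ' (hsub hσ')
    have hb2 := hhb τ₂ (Set.right_mem_Icc.2 hτ12)
    have e0 : (1:ℝ) ≤ Real.exp (hh σ') := by
      rw [← Real.exp_zero]; exact exp_le_exp.2 hb1.1
    have e1 : O σ' ≤ uf σ' := by
      have h := mul_le_mul_of_nonneg_left e0 hOσnn
      simpa [hufdef] using h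
    have e2 : uf τ₂ ≤ O τ₂ * Real.exp 250 := by
      have h := mul_le_mul_of_nonneg_left (exp_le_exp.2 (by linarith [hb2.2] : hh τ₂ ≤ 250)) hOτ₂nn
      simpa [hufdef] using h
    calc O σ' ≤ uf σ' := e1
      _ ≤ uf τ₂ := h1
      _ ≤ O τ₂ * Real.exp 250 := e2
      _ = Real.exp 250 * O τ₂ := mul_comm _ _
  have hOτ₂θ : O τ₂ ≤ (g/1000)/2 := by
    have h2e : (g/1000)/(2*Real.exp 250) ≤ (g/1000)/2 := by
      rw [div_le_div_iff₀ (by positivity) (by norm_num)]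
      nlinarith [hexp1, hg]
    linarith
  set W : Set ℝ := {ρ | ρ ∈ Set.Icc τ₁ τ₂ ∧ ∀ σ' ∈ Set.Icc ρ τ₂, O σ' ≤ g/1000} with hWdef
  have hτ₂W : τ₂ ∈ W := by
    refine ⟨Set.right_mem_Icc.2 hτ12, ?_⟩
    intro σ' hσ'
    have hE : σ' = τ₂ := le_antisymm hσ'.2 hσ'.1
    rw [hE]; linarith
  have hWbdd : BddBelow W := ⟨τ₁, fun x hx => hx.1.1⟩
  have hWne : W.Nonempty := ⟨τ₂, hτ₂W⟩
  set ρ0 : ℝ := sInf W with hρ0def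
  have hρ0ge : τ₁ ≤ ρ0 := le_csInf hWne (fun x hx => hx.1.1)
  have hρ0le : ρ0 ≤ τ₂ := csInf_le hWbdd hτ₂W
  have hρ0mem : ρ0 ∈ Set.Icc τ₁ τ₂ := ⟨hρ0ge, hρ0le⟩
  have hρ0W : ρ0 ∈ W := by
    refine ⟨hρ0mem, ?_⟩
    intro σ' hσ'
    rcases eq_or_lt_of_le hσ'.1 with heq | hlt
    · rcases eq_or_lt_of_le hσ'.2 with heq2 | hlt2
      · rw [heq2]; linarith
      · have hσ'mem : σ' ∈ Set.Icc τ₁ τ₂ := ⟨hρ0ge.trans hσ'.1, hσ'.2⟩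
        have hcont : ContinuousAt O σ' := (sol.hO σ' hσ'mem).continuousAt
        have htend : Tendsto O (𝓝[>] σ') (𝓝 (O σ')) := hcont.continuousWithinAt
        refine le_of_tendsto htend ?_
        have hmem : Set.Ioc σ' τ₂ ∈ 𝓝[>] σ' := Ioc_mem_nhdsGT_of_mem ⟨le_refl σ', hlt2⟩
        filter_upwards [hmem] with t ht
        have hinf : sInf W < t := by rw [← hρ0def, heq]; exact ht.1
        obtain ⟨ρ, hρW, hρt⟩ := exists_lt_of_csInf_lt hWne hinf
        exact hρW.2 t ⟨hρt.le, ht.2⟩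
    · have hinf : sInf W < σ' := by rw [← hρ0def]; exact hlt
      obtain ⟨ρ, hρW, hρσ⟩ := exists_lt_of_csInf_lt hWne hinf
      exact hρW.2 σ' ⟨hρσ.le, hσ'.2⟩
  have hhalf : ∀ σ' ∈ Set.Icc ρ0 τ₂, O σ' ≤ (g/1000)/2 := by
    intro σ' hσ'
    have h := hKL ρ0 hρ0mem hρ0W.2 σ' hσ'
    have h2 : Real.exp 250 * O τ₂ ≤ Real.exp 250 * εv :=
      mul_le_mul_of_nonneg_left hO2 (exp_pos _).le
    have h4 : Real.exp 250 * εv ≤ Real.exp 250 * ((g/1000)/(2*Real.exp 250)) :=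
      mul_le_mul_of_nonneg_left hεθ (exp_pos _).le
    have h5 : Real.exp 250 * ((g/1000)/(2*Real.exp 250)) = (g/1000)/2 := by
      field_simp
    linarith
  have hρ0τ₁ : ρ0 ≤ τ₁ := by
    by_contra hgt
    push_neg at hgt
    have hcont : ContinuousAt O ρ0 := (sol.hO ρ0 hρ0mem).continuousAt
    obtain ⟨δ, hδ0, hball⟩ := Metric.continuousAt_iff.1 hcont ((g/1000)/2) (by positivity)
    have hρ'1 : τ₁ ≤ max τ₁ (ρ0 - δ/2) := le_max_left _ _
    have hρ'2 : max τ₁ (ρ0 - δ/2) < ρ0 := max_lt hgt (by linarith)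
    have hρ'W : max τ₁ (ρ0 - δ/2) ∈ W := by
      refine ⟨⟨hρ'1, hρ'2.le.trans hρ0le⟩, ?_⟩
      intro σ' hσ'
      rcases le_or_gt ρ0 σ' with hc | hc
      · linarith [hhalf σ' ⟨hc, hσ'.2⟩]
      · have h6 : ρ0 - δ/2 ≤ σ' := le_trans (le_max_right τ₁ (ρ0 - δ/2)) hσ'.1
        have hd : dist σ' ρ0 < δ := by
          rw [Real.dist_eq, abs_lt]
          constructor <;> linarith
        have h7 := hball hd
        rw [Real.dist_eq, abs_lt] at h7
        have h8 := hhalf ρ0 ⟨le_refl _, hρ0le⟩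
        linarith [h7.2]
    have h9 : ρ0 ≤ max τ₁ (ρ0 - δ/2) := by
      rw [hρ0def]; exact csInf_le hWbdd hρ'W
    linarith
  intro τ hτ
  exact hKL τ₁ ⟨le_refl _, hτ12⟩
    (fun σ' hσ' => hρ0W.2 σ' ⟨hρ0τ₁.trans hσ'.1, hσ'.2⟩) τ hτ


end WainwrightHsu
end
end

section
/- Let 2/3 < γ < 2 and let x be a solution of the Wainwright–Hsu system such that lim_{τ→−∞} (Σ₊(τ), Σ₋(τ)) = (−1, 0). Then the solution lies in the invariant set given by Σ₋ ≡ 0 and N₂ ≡ N₃. -/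
open Real Filter Topology Set

noncomputable section

namespace WainwrightHsu

/-- If `h` has nonneg derivative on `[a,b]`, then `h a ≤ h b`. -/
lemma aux_le_of_deriv_nonneg {h h' : ℝ → ℝ} {a b : ℝ} (hab : a ≤ b)
    (hd : ∀ x ∈ Set.Icc a b, HasDerivAt h (h' x) x)
    (hp : ∀ x ∈ Set.Icc a b, 0 ≤ h' x) : h a ≤ h b := by
  have hc : ContinuousOn h (Set.Icc a b) :=
    fun x hx => ((hd x hx).continuousAt).continuousWithinAt
  have hmono : MonotoneOn h (Set.Icc a b) := by
    apply monotoneOn_of_deriv_nonneg (convex_Icc a b) hc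
    · intro x hx
      rw [interior_Icc] at hx
      exact ((hd x (Set.Ioo_subset_Icc_self hx)).differentiableAt).differentiableWithinAt
    · intro x hx
      rw [interior_Icc] at hx
      rw [(hd x (Set.Ioo_subset_Icc_self hx)).deriv]
      exact hp x (Set.Ioo_subset_Icc_self hx)
  exact hmono (Set.left_mem_Icc.2 hab) (Set.right_mem_Icc.2 hab) hab

/-- If `h` has nonpos derivative on `[a,b]`, then `h b ≤ h a`. -/
lemma aux_le_of_deriv_nonpos {h h' : ℝ → ℝ} {a b : ℝ} (hab : a ≤ b)
    (hd : ∀ x ∈ Set.Icc a b, HasDerivAt h (h' x) x)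
    (hp : ∀ x ∈ Set.Icc a b, h' x ≤ 0) : h b ≤ h a := by
  have := aux_le_of_deriv_nonneg (h := fun x => -h x) (h' := fun x => -h' x) hab
    (fun x hx => (hd x hx).neg) (fun x hx => neg_nonneg.2 (hp x hx))
  linarith

lemma aux_exp_sq (c : ℝ) : (Real.exp c)^2 = Real.exp (2*c) := by
  rw [sq, ← Real.exp_add]; ring_nf

lemma aux_abs_of_sq {x y : ℝ} (hy : 0 ≤ y) (h : x^2 ≤ y^2) : |x| ≤ y := by
  nlinarith [abs_nonneg x, sq_abs x]

/-- Exponential decay estimate for squares. -/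
lemma aux_sq_decay {f r : ℝ → ℝ} {a T : ℝ}
    (hd : ∀ τ ∈ Set.Iic T, HasDerivAt f (r τ * f τ) τ)
    (hr : ∀ τ ∈ Set.Iic T, a ≤ r τ) :
    ∀ σ ∈ Set.Iic T, (f σ)^2 ≤ (f T)^2 * Real.exp (2*a*(σ - T)) := by
  intro σ hσ
  have key : (f σ)^2 * Real.exp (-(2*a)*σ) ≤ (f T)^2 * Real.exp (-(2*a)*T) := by
    apply aux_le_of_deriv_nonneg hσ
      (h' := fun τ => (2 * f τ ^ 1 * (r τ * f τ)) * Real.exp (-(2*a)*τ)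
        + (f τ)^2 * (Real.exp (-(2*a)*τ) * (-(2*a) * 1)))
    · intro x hx
      have hx' : x ∈ Set.Iic T := le_trans hx.2 le_rfl
      have h1 : HasDerivAt (fun τ => (f τ)^2) (2 * f x ^ 1 * (r x * f x)) x :=
        (hd x hx').pow 2
      have h2 : HasDerivAt (fun τ => Real.exp (-(2*a)*τ))
          (Real.exp (-(2*a)*x) * (-(2*a) * 1)) x :=
        ((hasDerivAt_id x).const_mul (-(2*a))).exp
      exact h1.mul h2
    · intro x hx
      have hx' : x ∈ Set.Iic T := le_trans hx.2 le_rfl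
      have hra := hr x hx'
      have he := Real.exp_pos (-(2*a)*x)
      have hsq := sq_nonneg (f x)
      have : (2 * f x ^ 1 * (r x * f x)) * Real.exp (-(2*a)*x)
          + (f x)^2 * (Real.exp (-(2*a)*x) * (-(2*a) * 1))
          = 2 * Real.exp (-(2*a)*x) * (f x)^2 * (r x - a) := by ring
      rw [this]
      have : 0 ≤ r x - a := by linarith
      positivity
  calc (f σ)^2 = ((f σ)^2 * Real.exp (-(2*a)*σ)) * Real.exp ((2*a)*σ) := by
        rw [mul_assoc, ← Real.exp_add]
        norm_num
      _ ≤ ((f T)^2 * Real.exp (-(2*a)*T)) * Real.exp ((2*a)*σ) :=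
        mul_le_mul_of_nonneg_right key (Real.exp_pos _).le
      _ = (f T)^2 * Real.exp (2*a*(σ-T)) := by
        rw [mul_assoc, ← Real.exp_add]
        congr 2
        ring

/-- The key pointwise algebraic inequality. -/
lemma aux_key_ineq {c O Sm N1 V g R d A B cross : ℝ}
    (hc : 0 ≤ c) (hO : 0 ≤ O) (hV0 : 0 ≤ V)
    (hd : d = Sm^2 + V)
    (hdg : d = g*(2-g) + R)
    (hA : A = c*O + 2*R - 2*V)
    (hB : B = A + 2*g)
    (hgb : |g| ≤ 1/2)
    (hcross : cross ≤ 3* |N1| *d) :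
    2*A*Sm^2 + 2*B*V + cross ≤ (2*c*O + 14* |R| + 3* |N1|)*d := by
  subst hB hA hd
  have hd0 : (0:ℝ) ≤ Sm^2 + V := by positivity
  have hVd : V ≤ Sm^2 + V := by nlinarith [sq_nonneg Sm]
  have hg1 : g ≤ 1/2 := (abs_le.mp hgb).2
  have hg2 : -(1/2) ≤ g := (abs_le.mp hgb).1
  have hR1 : R ≤ |R| := le_abs_self R
  have hR2 : -|R| ≤ R := neg_abs_le R
  have hR0 : 0 ≤ |R| := abs_nonneg R
  have hN0 : 0 ≤ |N1| := abs_nonneg N1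
  have hGB : g - (Sm^2 + V) ≤ (5/2)* |R| := by
    rcases le_or_gt 0 g with h|h
    · nlinarith [mul_nonneg h (by linarith : (0:ℝ) ≤ 1/2 - g)]
    · nlinarith [mul_nonneg (by linarith : (0:ℝ) ≤ -g) (by linarith : (0:ℝ) ≤ 1/2 + g),
        sq_nonneg g]
  have t1 : 4*V*(g - (Sm^2+V)) ≤ 10* |R| *(Sm^2+V) := by
    nlinarith [mul_le_mul_of_nonneg_left hGB (by linarith : (0:ℝ) ≤ 4*V),
      mul_nonneg hR0 (sub_nonneg.2 hVd)]
  have t2 : 0 ≤ 4*(|R| - R)*(Sm^2+V) :=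
    mul_nonneg (by linarith) hd0
  nlinarith [t1, t2, hcross]

set_option maxHeartbeats 2000000 in
/-- for `2/3 < γ < 2`, a solution whose `(Σ₊, Σ₋)` converges to `(-1, 0)`
as `τ → -∞` lies in the invariant set `Σ₋ ≡ 0`, `N₂ ≡ N₃`. -/
theorem limit_minus_one_zero_implies_taub
    (γ : ℝ) (hγ1 : 2/3 < γ) (hγ2 : γ < 2)
    (O Sp Sm n1 n2 n3 : ℝ → ℝ)
    (hsol : SolOn γ (Set.Iic 0) O Sp Sm n1 n2 n3)
    (hSp : Tendsto Sp atBot (𝓝 (-1))) (hSm : Tendsto Sm atBot (𝓝 0)) :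
    ∀ τ ∈ Set.Iic (0:ℝ), Sm τ = 0 ∧ n2 τ = n3 τ := by
  have sqrt3_sq : Real.sqrt 3 ^ 2 = 3 := Real.sq_sqrt (by norm_num)
  have sqrt3_nn : (0:ℝ) ≤ Real.sqrt 3 := Real.sqrt_nonneg 3
  have sqrt3_le2 : Real.sqrt 3 ≤ 2 := by nlinarith
  have hc0 : (0:ℝ) ≤ 1/2 * (3*γ - 2) := by linarith
  -- squared distance to the Taub set and its derivative along the flow
  obtain ⟨d, hd_def⟩ : ∃ f : ℝ → ℝ, f = fun t => (Sm t)^2 + 3/4 * (n2 t - n3 t)^2 := ⟨_, rfl⟩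
  have hd0 : ∀ t, 0 ≤ d t := fun t => by simp only [hd_def]; positivity
  obtain ⟨D, hD_def⟩ : ∃ f : ℝ → ℝ, f = fun t => 2 * (qf γ (O t) (Sp t) (Sm t) - 2) * (Sm t)^2
        + 3/2 * (qf γ (O t) (Sp t) (Sm t) + 2 * Sp t) * (n2 t - n3 t)^2
        + 3 * Real.sqrt 3 * n1 t * Sm t * (n2 t - n3 t) := ⟨_, rfl⟩
  have hdd : ∀ τ ∈ Set.Iic (0:ℝ), HasDerivAt d (D τ) τ := by
    intro τ hτ
    simp only [hd_def, hD_def]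
    have h1 := (hsol.hSm τ hτ).fun_pow 2
    have h2 := (((hsol.hn2 τ hτ).fun_sub (hsol.hn3 τ hτ)).fun_pow 2).const_mul (3/4 : ℝ)
    have h3 := h1.fun_add h2
    refine h3.congr_deriv ?_
    simp only [SMf]
    ring
  -- the cross-term bound, valid everywhere
  have hcross : ∀ τ : ℝ, 3 * Real.sqrt 3 * n1 τ * Sm τ * (n2 τ - n3 τ)
      ≤ 3 * |n1 τ| * ((Sm τ)^2 + 3/4 * (n2 τ - n3 τ)^2) := by
    intro τ
    have e1 : Real.sqrt 3 * Sm τ * (n2 τ - n3 τ) ≤ (Sm τ)^2 + 3/4 * (n2 τ - n3 τ)^2 := by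
      nlinarith [sq_nonneg (2 * Sm τ - Real.sqrt 3 * (n2 τ - n3 τ))]
    have e2 : -(Real.sqrt 3 * Sm τ * (n2 τ - n3 τ)) ≤ (Sm τ)^2 + 3/4 * (n2 τ - n3 τ)^2 := by
      nlinarith [sq_nonneg (2 * Sm τ + Real.sqrt 3 * (n2 τ - n3 τ))]
    rcases abs_cases (n1 τ) with ⟨h, h'⟩ | ⟨h, h'⟩ <;> nlinarith
  -- choose the small parameter and the time T
  have hγ6 : (0:ℝ) < 6 - 3*γ := by linarith
  obtain ⟨ε, hε_def⟩ : ∃ x : ℝ, x = min (1/100) ((6-3*γ)/16) := ⟨_, rfl⟩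
  have hε0 : 0 < ε := by rw [hε_def]; exact lt_min (by norm_num) (by linarith)
  have hε1 : ε ≤ 1/100 := by rw [hε_def]; exact min_le_left _ _
  have hε2 : ε ≤ (6-3*γ)/16 := by rw [hε_def]; exact min_le_right _ _
  have hgt : Tendsto (fun τ => 1 + Sp τ) atBot (𝓝 0) := by
    have h := hSp.const_add (1:ℝ)
    simpa using h
  have hev : ∀ᶠ τ in (atBot : Filter ℝ), |1 + Sp τ| ≤ ε ∧ |Sm τ| ≤ ε := by
    filter_upwards [Metric.tendsto_nhds.mp hgt ε hε0, Metric.tendsto_nhds.mp hSm ε hε0]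
      with τ h1 h2
    rw [Real.dist_eq] at h1 h2
    simp only [sub_zero] at h1 h2
    exact ⟨h1.le, h2.le⟩
  obtain ⟨T0, hT0⟩ := eventually_atBot.mp hev
  obtain ⟨T, hT_def⟩ : ∃ x : ℝ, x = min T0 0 := ⟨_, rfl⟩
  have hT0' : T ≤ 0 := by rw [hT_def]; exact min_le_right _ _
  have hmem : ∀ τ : ℝ, τ ≤ T → τ ∈ Set.Iic (0:ℝ) := fun τ h => le_trans h hT0'
  have hreg : ∀ τ ≤ T, |1 + Sp τ| ≤ ε ∧ |Sm τ| ≤ ε :=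
    fun τ hτ => hT0 τ (le_trans hτ (by rw [hT_def]; exact min_le_left _ _))
  -- lower bounds for the rates on (-∞, T]
  have hqlow : ∀ τ ≤ T, 2 - 4*ε ≤ qf γ (O τ) (Sp τ) (Sm τ) := by
    intro τ hτ
    obtain ⟨h1, -⟩ := hreg τ hτ
    have hO := hsol.hOnn τ (hmem τ hτ)
    obtain ⟨h1a, h1b⟩ := abs_le.mp h1
    simp only [qf]
    nlinarith [sq_nonneg (1 + Sp τ), sq_nonneg (Sm τ), mul_nonneg hc0 hO]
  obtain ⟨lam, hlam_def⟩ : ∃ x : ℝ, x = min 1 ((6-3*γ)/2) := ⟨_, rfl⟩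
  have hlam0 : 0 < lam := by rw [hlam_def]; exact lt_min (by norm_num) (by linarith)
  have hlam1 : lam ≤ 1 := by rw [hlam_def]; exact min_le_left _ _
  have hrO : ∀ τ ∈ Set.Iic T, lam ≤ 2 * qf γ (O τ) (Sp τ) (Sm τ) - (3*γ - 2) := by
    intro τ hτ
    have := hqlow τ hτ
    have h2 : lam ≤ (6-3*γ)/2 := by rw [hlam_def]; exact min_le_right _ _
    linarith
  have hr1 : ∀ τ ∈ Set.Iic T, (5:ℝ) ≤ qf γ (O τ) (Sp τ) (Sm τ) - 4 * Sp τ := by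
    intro τ hτ
    obtain ⟨h1, -⟩ := hreg τ hτ
    obtain ⟨h1a, h1b⟩ := abs_le.mp h1
    have := hqlow τ hτ
    linarith
  have hr23 : ∀ τ ∈ Set.Iic T, (-1:ℝ) ≤ qf γ (O τ) (Sp τ) (Sm τ) + 2 * Sp τ
      + 2 * Real.sqrt 3 * Sm τ ∧
      (-1:ℝ) ≤ qf γ (O τ) (Sp τ) (Sm τ) + 2 * Sp τ - 2 * Real.sqrt 3 * Sm τ := by
    intro τ hτ
    obtain ⟨h1, h2⟩ := hreg τ hτ
    obtain ⟨h1a, h1b⟩ := abs_le.mp h1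
    obtain ⟨h2a, h2b⟩ := abs_le.mp h2
    have hO := hsol.hOnn τ (hmem τ hτ)
    have hs : Real.sqrt 3 * |Sm τ| ≤ 2 * ε :=
      mul_le_mul sqrt3_le2 h2 (abs_nonneg _) (by norm_num)
    have hq : 2 * (Sp τ)^2 + 2 * Sp τ ≥ -2*ε := by nlinarith [sq_nonneg (1 + Sp τ)]
    have habs1 : Real.sqrt 3 * Sm τ ≤ 2 * ε := by
      calc Real.sqrt 3 * Sm τ ≤ Real.sqrt 3 * |Sm τ| := by
            have := le_abs_self (Sm τ); nlinarith
        _ ≤ 2 * ε := hs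
    have habs2 : -(2*ε) ≤ Real.sqrt 3 * Sm τ := by
      have h' : Real.sqrt 3 * (-Sm τ) ≤ 2 * ε := by
        calc Real.sqrt 3 * (-Sm τ) ≤ Real.sqrt 3 * |Sm τ| := by
              have := neg_abs_le (Sm τ); nlinarith
          _ ≤ 2 * ε := hs
      linarith [h']
    have e3 : -(4*ε) ≤ 2 * Real.sqrt 3 * Sm τ := by nlinarith
    have e4 : 2 * Real.sqrt 3 * Sm τ ≤ 4*ε := by nlinarith
    constructor <;>
      (simp only [qf]; nlinarith [hq, e3, e4, mul_nonneg hc0 hO, sq_nonneg (Sm τ), hε1, hε0.le])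
  -- exponential decay estimates on (-∞, T]
  have dO := aux_sq_decay (f := O) (r := fun τ => 2 * qf γ (O τ) (Sp τ) (Sm τ) - (3*γ-2))
    (a := lam) (T := T) (fun τ hτ => hsol.hO τ (hmem τ hτ)) hrO
  have dn1 := aux_sq_decay (f := n1) (r := fun τ => qf γ (O τ) (Sp τ) (Sm τ) - 4 * Sp τ)
    (a := 5) (T := T) (fun τ hτ => hsol.hn1 τ (hmem τ hτ)) hr1
  have dn2 := aux_sq_decay (f := n2)
    (r := fun τ => qf γ (O τ) (Sp τ) (Sm τ) + 2 * Sp τ + 2 * Real.sqrt 3 * Sm τ)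
    (a := -1) (T := T) (fun τ hτ => hsol.hn2 τ (hmem τ hτ)) (fun τ hτ => (hr23 τ hτ).1)
  have dn3 := aux_sq_decay (f := n3)
    (r := fun τ => qf γ (O τ) (Sp τ) (Sm τ) + 2 * Sp τ - 2 * Real.sqrt 3 * Sm τ)
    (a := -1) (T := T) (fun τ hτ => hsol.hn3 τ (hmem τ hτ)) (fun τ hτ => (hr23 τ hτ).2)
  have hOT : 0 ≤ O T := hsol.hOnn T hT0'
  have bO : ∀ σ ≤ T, O σ ≤ O T * Real.exp (lam*(σ-T)) := by
    intro σ hσ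
    have h := dO σ hσ
    have hOσ : 0 ≤ O σ := hsol.hOnn σ (hmem σ hσ)
    have habs : |O σ| ≤ O T * Real.exp (lam*(σ-T)) := by
      apply aux_abs_of_sq (by positivity)
      rw [mul_pow, aux_exp_sq]
      calc (O σ)^2 ≤ (O T)^2 * Real.exp (2*lam*(σ-T)) := h
        _ = (O T)^2 * Real.exp (2*(lam*(σ-T))) := by rw [mul_assoc]
    calc O σ ≤ |O σ| := le_abs_self _
      _ ≤ _ := habs
  have b1 : ∀ σ ≤ T, |n1 σ| ≤ |n1 T| * Real.exp (lam*(σ-T)) := by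
    intro σ hσ
    have h := dn1 σ hσ
    have hx : σ - T ≤ 0 := by linarith
    apply aux_abs_of_sq (by positivity)
    rw [mul_pow, aux_exp_sq, sq_abs]
    calc (n1 σ)^2 ≤ (n1 T)^2 * Real.exp (2*5*(σ-T)) := h
      _ ≤ (n1 T)^2 * Real.exp (2*(lam*(σ-T))) := by
          have he : Real.exp (2*5*(σ-T)) ≤ Real.exp (2*(lam*(σ-T))) :=
            Real.exp_le_exp.mpr (by nlinarith)
          nlinarith [sq_nonneg (n1 T)]
  have b11 : ∀ σ ≤ T, (n1 σ)^2 ≤ (n1 T)^2 * Real.exp (lam*(σ-T)) := by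
    intro σ hσ
    have hx : σ - T ≤ 0 := by linarith
    calc (n1 σ)^2 ≤ (n1 T)^2 * Real.exp (2*5*(σ-T)) := dn1 σ hσ
      _ ≤ (n1 T)^2 * Real.exp (lam*(σ-T)) := by
          have he : Real.exp (2*5*(σ-T)) ≤ Real.exp (lam*(σ-T)) :=
            Real.exp_le_exp.mpr (by nlinarith)
          nlinarith [sq_nonneg (n1 T)]
  have b12 : ∀ σ ≤ T, |n1 σ * n2 σ| ≤ |n1 T| * |n2 T| * Real.exp (lam*(σ-T)) := by
    intro σ hσ
    have h1 := dn1 σ hσ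
    have h2 := dn2 σ hσ
    have hx : σ - T ≤ 0 := by linarith
    apply aux_abs_of_sq (by positivity)
    have hge : (|n1 T| * |n2 T| * Real.exp (lam*(σ-T)))^2
        = (n1 T)^2 * (n2 T)^2 * Real.exp (2*(lam*(σ-T))) := by
      rw [mul_pow, mul_pow, aux_exp_sq, sq_abs, sq_abs]
    rw [hge]
    have hmul := mul_le_mul h1 h2 (sq_nonneg (n2 σ)) (by positivity)
    have hE : Real.exp (2*5*(σ-T)) * Real.exp (2*(-1)*(σ-T)) = Real.exp (8*(σ-T)) := by
      rw [← Real.exp_add]; ring_nf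
    have he : Real.exp (8*(σ-T)) ≤ Real.exp (2*(lam*(σ-T))) :=
      Real.exp_le_exp.mpr (by nlinarith)
    calc (n1 σ * n2 σ)^2 = (n1 σ)^2 * (n2 σ)^2 := by ring
      _ ≤ ((n1 T)^2 * Real.exp (2*5*(σ-T))) * ((n2 T)^2 * Real.exp (2*(-1)*(σ-T))) := hmul
      _ = (n1 T)^2 * (n2 T)^2 * Real.exp (8*(σ-T)) := by rw [← hE]; ring
      _ ≤ (n1 T)^2 * (n2 T)^2 * Real.exp (2*(lam*(σ-T))) := by
          nlinarith [sq_nonneg (n1 T), sq_nonneg (n2 T),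
            mul_nonneg (sq_nonneg (n1 T)) (sq_nonneg (n2 T))]
  have b13 : ∀ σ ≤ T, |n1 σ * n3 σ| ≤ |n1 T| * |n3 T| * Real.exp (lam*(σ-T)) := by
    intro σ hσ
    have h1 := dn1 σ hσ
    have h2 := dn3 σ hσ
    have hx : σ - T ≤ 0 := by linarith
    apply aux_abs_of_sq (by positivity)
    have hge : (|n1 T| * |n3 T| * Real.exp (lam*(σ-T)))^2
        = (n1 T)^2 * (n3 T)^2 * Real.exp (2*(lam*(σ-T))) := by
      rw [mul_pow, mul_pow, aux_exp_sq, sq_abs, sq_abs]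
    rw [hge]
    have hmul := mul_le_mul h1 h2 (sq_nonneg (n3 σ)) (by positivity)
    have hE : Real.exp (2*5*(σ-T)) * Real.exp (2*(-1)*(σ-T)) = Real.exp (8*(σ-T)) := by
      rw [← Real.exp_add]; ring_nf
    have he : Real.exp (8*(σ-T)) ≤ Real.exp (2*(lam*(σ-T))) :=
      Real.exp_le_exp.mpr (by nlinarith)
    calc (n1 σ * n3 σ)^2 = (n1 σ)^2 * (n3 σ)^2 := by ring
      _ ≤ ((n1 T)^2 * Real.exp (2*5*(σ-T))) * ((n3 T)^2 * Real.exp (2*(-1)*(σ-T))) := hmul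
      _ = (n1 T)^2 * (n3 T)^2 * Real.exp (8*(σ-T)) := by rw [← hE]; ring
      _ ≤ (n1 T)^2 * (n3 T)^2 * Real.exp (2*(lam*(σ-T))) := by
          nlinarith [sq_nonneg (n1 T), sq_nonneg (n3 T),
            mul_nonneg (sq_nonneg (n1 T)) (sq_nonneg (n3 T))]
  -- the R function and its bound
  obtain ⟨Rf, hRf_def⟩ : ∃ f : ℝ → ℝ,
      f = fun t => 3/2 * n1 t * (n2 t + n3 t) - 3/4 * (n1 t)^2 - O t := ⟨_, rfl⟩
  obtain ⟨CR, hCR_def⟩ : ∃ x : ℝ,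
      x = 3/2 * (|n1 T| * |n2 T|) + 3/2 * (|n1 T| * |n3 T|) + 3/4 * (n1 T)^2 + O T := ⟨_, rfl⟩
  have hR : ∀ σ ≤ T, |Rf σ| ≤ CR * Real.exp (lam*(σ-T)) := by
    intro σ hσ
    have hOσ := hsol.hOnn σ (hmem σ hσ)
    have e12 := b12 σ hσ
    have e13 := b13 σ hσ
    have e11 := b11 σ hσ
    have eO := bO σ hσ
    have l1 := le_abs_self (n1 σ * n2 σ)
    have l2 := neg_abs_le (n1 σ * n2 σ)
    have l3 := le_abs_self (n1 σ * n3 σ)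
    have l4 := neg_abs_le (n1 σ * n3 σ)
    have hEp := Real.exp_pos (lam*(σ-T))
    rw [abs_le]
    simp only [hRf_def, hCR_def]
    constructor
    · nlinarith [sq_nonneg (n1 σ), mul_nonneg (sq_nonneg (n1 σ)) hEp.le]
    · nlinarith [sq_nonneg (n1 σ), mul_nonneg hOT hEp.le,
        mul_nonneg (sq_nonneg (n1 T)) hEp.le]
  obtain ⟨C, hC_def⟩ : ∃ x : ℝ, x = 2*(1/2*(3*γ-2))*(O T) + 14*CR + 3*|n1 T| := ⟨_, rfl⟩
  have hCR0 : 0 ≤ CR := by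
    rw [hCR_def]
    nlinarith [mul_nonneg (abs_nonneg (n1 T)) (abs_nonneg (n2 T)),
      mul_nonneg (abs_nonneg (n1 T)) (abs_nonneg (n3 T)), sq_nonneg (n1 T)]
  have hCge0 : 0 ≤ C := by
    rw [hC_def]
    nlinarith [mul_nonneg hc0 hOT, abs_nonneg (n1 T), hCR0]
  -- the fundamental differential inequality on (-∞, T]
  have hΨD : ∀ t ∈ Set.Iic T, D t ≤ C * Real.exp (lam*(t-T)) * d t := by
    intro σ hσ
    have hconσ := hsol.hcon σ (hmem σ hσ)
    simp only [Constraint] at hconσ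
    have hdg : Sm σ^2 + 3/4*(n2 σ - n3 σ)^2 = (1+Sp σ)*(2-(1+Sp σ)) + Rf σ := by
      simp only [hRf_def]
      linear_combination hconσ
    have hA : qf γ (O σ) (Sp σ) (Sm σ) - 2
        = 1/2*(3*γ-2)*(O σ) + 2*(Rf σ) - 2*(3/4*(n2 σ - n3 σ)^2) := by
      simp only [qf]
      linear_combination 2*hdg
    have hB : qf γ (O σ) (Sp σ) (Sm σ) + 2*Sp σ
        = (qf γ (O σ) (Sp σ) (Sm σ) - 2) + 2*(1+Sp σ) := by ring
    have hgb : |1+Sp σ| ≤ 1/2 := le_trans (hreg σ hσ).1 (by linarith)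
    have hkey := aux_key_ineq (c := 1/2*(3*γ-2)) (O := O σ) (Sm := Sm σ) (N1 := n1 σ)
      (V := 3/4*(n2 σ - n3 σ)^2) (g := 1+Sp σ) (R := Rf σ)
      (d := Sm σ^2 + 3/4*(n2 σ - n3 σ)^2)
      (A := qf γ (O σ) (Sp σ) (Sm σ) - 2) (B := qf γ (O σ) (Sp σ) (Sm σ) + 2*Sp σ)
      (cross := 3*Real.sqrt 3*n1 σ*Sm σ*(n2 σ - n3 σ))
      hc0 (hsol.hOnn σ (hmem σ hσ)) (by positivity) rfl hdg hA hB hgb (hcross σ)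
    have hpsi : 2*(1/2*(3*γ-2))*(O σ) + 14*|Rf σ| + 3*|n1 σ| ≤ C * Real.exp (lam*(σ-T)) := by
      have k1 := bO σ hσ
      have k2 := hR σ hσ
      have k3 := b1 σ hσ
      have k4 : 2*(1/2*(3*γ-2))*(O σ) ≤ 2*(1/2*(3*γ-2))*(O T * Real.exp (lam*(σ-T))) :=
        mul_le_mul_of_nonneg_left k1 (by linarith)
      rw [hC_def]
      nlinarith [k2, k3, k4]
    calc D σ = 2*(qf γ (O σ) (Sp σ) (Sm σ) - 2)*(Sm σ)^2
          + 2*(qf γ (O σ) (Sp σ) (Sm σ) + 2*Sp σ)*(3/4*(n2 σ - n3 σ)^2)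
          + 3*Real.sqrt 3*n1 σ*Sm σ*(n2 σ - n3 σ) := by simp only [hD_def]; ring
      _ ≤ (2*(1/2*(3*γ-2))*(O σ) + 14*|Rf σ| + 3*|n1 σ|)*(Sm σ^2 + 3/4*(n2 σ - n3 σ)^2) := hkey
      _ ≤ (C * Real.exp (lam*(σ-T))) * (Sm σ^2 + 3/4*(n2 σ - n3 σ)^2) :=
          mul_le_mul_of_nonneg_right hpsi (by positivity)
      _ = C * Real.exp (lam*(σ-T)) * d σ := by simp only [hd_def]
  -- Gronwall on (-∞, T]
  have hlamne : lam ≠ 0 := ne_of_gt hlam0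
  obtain ⟨Gd, hGd_def⟩ : ∃ f : ℝ → ℝ, f = fun t =>
      D t * Real.exp (-(C/lam) * Real.exp (lam*(t-T)))
        + d t * (Real.exp (-(C/lam) * Real.exp (lam*(t-T)))
          * (-(C/lam) * (Real.exp (lam*(t-T)) * (lam*1)))) := ⟨_, rfl⟩
  have hGd : ∀ t ∈ Set.Iic T, HasDerivAt
      (fun t => d t * Real.exp (-(C/lam) * Real.exp (lam*(t-T)))) (Gd t) t := by
    intro t ht
    have i1 : HasDerivAt (fun x : ℝ => lam*(x-T)) (lam*1) t :=
      ((hasDerivAt_id t).sub_const T).const_mul lam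
    have i4 := ((i1.exp).const_mul (-(C/lam))).exp
    rw [hGd_def]
    exact (hdd t (hmem t ht)).mul i4
  have hGd_le : ∀ t ∈ Set.Iic T, Gd t ≤ 0 := by
    intro t ht
    have h5 := hΨD t ht
    have hE2 := Real.exp_pos (-(C/lam) * Real.exp (lam*(t-T)))
    have hkey : -(C/lam) * (Real.exp (lam*(t-T)) * (lam*1)) = -(C * Real.exp (lam*(t-T))) := by
      field_simp
    simp only [hGd_def]
    rw [hkey]
    nlinarith [mul_le_mul_of_nonneg_right h5 hE2.le]
  have hGanti : ∀ t, t ≤ T → ∀ s, t ≤ s → s ≤ T →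
      d s * Real.exp (-(C/lam) * Real.exp (lam*(s-T)))
        ≤ d t * Real.exp (-(C/lam) * Real.exp (lam*(t-T))) := by
    intro t ht s hts hsT
    have := aux_le_of_deriv_nonpos
      (h := fun t => d t * Real.exp (-(C/lam) * Real.exp (lam*(t-T)))) (h' := Gd) hts
      (fun x hx => hGd x (le_trans hx.2 hsT))
      (fun x hx => hGd_le x (le_trans hx.2 hsT))
    simpa using this
  -- d tends to zero at -∞
  have htd : Tendsto d atBot (𝓝 0) := by
    have l2 : Tendsto (fun τ => (1 + Sp τ)*(2 - (1 + Sp τ))) atBot (𝓝 0) := by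
      have h := hgt.mul (hgt.const_sub (2:ℝ))
      norm_num at h
      exact h
    have l4 : Tendsto (fun τ => Real.exp (lam*(τ-T))) atBot (𝓝 0) := by
      apply Real.tendsto_exp_atBot.comp
      apply Tendsto.const_mul_atBot hlam0
      simpa [sub_eq_add_neg] using tendsto_atBot_add_const_right atBot (-T) tendsto_id
    have lup : Tendsto (fun τ => (1 + Sp τ)*(2 - (1 + Sp τ)) + CR * Real.exp (lam*(τ-T)))
        atBot (𝓝 0) := by
      have h := l2.add ((l4.const_mul CR))
      norm_num at h
      simpa using h
    apply tendsto_of_tendsto_of_tendsto_of_le_of_le' tendsto_const_nhds lup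
    · exact Eventually.of_forall hd0
    · filter_upwards [eventually_le_atBot T] with σ hσ
      have hconσ := hsol.hcon σ (hmem σ hσ)
      simp only [Constraint] at hconσ
      have hdg : d σ = (1+Sp σ)*(2-(1+Sp σ)) + Rf σ := by
        simp only [hd_def, hRf_def]
        linear_combination hconσ
      have h9 := hR σ hσ
      have h10 := le_abs_self (Rf σ)
      linarith
  -- d vanishes identically on (-∞, T]
  have hdT : ∀ σ ≤ T, d σ = 0 := by
    intro σ hσ
    have hEσ := Real.exp_pos (-(C/lam) * Real.exp (lam*(σ-T)))
    have hGσ : 0 ≤ d σ * Real.exp (-(C/lam) * Real.exp (lam*(σ-T))) :=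
      mul_nonneg (hd0 σ) hEσ.le
    have hle : ∀ δ : ℝ, 0 < δ → d σ * Real.exp (-(C/lam) * Real.exp (lam*(σ-T))) ≤ δ := by
      intro δ hδ
      obtain ⟨τ, hτ1, hτ2⟩ := ((htd.eventually_lt_const hδ).and (eventually_le_atBot σ)).exists
      have h6 := hGanti τ (le_trans hτ2 hσ) σ hτ2 hσ
      have hE1 : Real.exp (-(C/lam) * Real.exp (lam*(τ-T))) ≤ 1 := by
        rw [Real.exp_le_one_iff]
        have h11 : 0 ≤ C/lam := div_nonneg hCge0 hlam0.le
        nlinarith [Real.exp_pos (lam*(τ-T))]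
      have h7 : d τ * Real.exp (-(C/lam) * Real.exp (lam*(τ-T))) ≤ d τ := by
        have := mul_le_mul_of_nonneg_left hE1 (hd0 τ)
        simpa using this
      linarith
    have hG0 : d σ * Real.exp (-(C/lam) * Real.exp (lam*(σ-T))) ≤ 0 := by
      by_contra hcon2
      push_neg at hcon2
      have := hle (d σ * Real.exp (-(C/lam) * Real.exp (lam*(σ-T))) / 2) (by linarith)
      linarith
    have : d σ ≤ 0 := by
      nlinarith [hEσ]
    exact le_antisymm this (hd0 σ)
  -- continuity and boundedness on [T, 0]
  have hcO : ContinuousOn O (Set.Icc T 0) :=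
    fun x hx => (hsol.hO x hx.2).continuousAt.continuousWithinAt
  have hcSp : ContinuousOn Sp (Set.Icc T 0) :=
    fun x hx => (hsol.hSp x hx.2).continuousAt.continuousWithinAt
  have hcSm : ContinuousOn Sm (Set.Icc T 0) :=
    fun x hx => (hsol.hSm x hx.2).continuousAt.continuousWithinAt
  have hcn1 : ContinuousOn n1 (Set.Icc T 0) :=
    fun x hx => (hsol.hn1 x hx.2).continuousAt.continuousWithinAt
  have hq_c : ContinuousOn (fun t => qf γ (O t) (Sp t) (Sm t)) (Set.Icc T 0) := by
    simp only [qf]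
    exact (continuousOn_const.mul hcO).add
      (continuousOn_const.mul ((hcSp.pow 2).add (hcSm.pow 2)))
  have hWc : ContinuousOn (fun t => 2*|qf γ (O t) (Sp t) (Sm t) - 2|
      + 2*|qf γ (O t) (Sp t) (Sm t) + 2*Sp t| + 3*|n1 t|) (Set.Icc T 0) := by
    refine ((continuousOn_const.mul (hq_c.sub continuousOn_const).abs).add
      (continuousOn_const.mul ((hq_c.add (continuousOn_const.mul hcSp)).abs))).add
      (continuousOn_const.mul hcn1.abs)
  obtain ⟨M, hM⟩ := IsCompact.exists_bound_of_continuousOn isCompact_Icc hWc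
  have hDM : ∀ t ∈ Set.Icc T 0, D t ≤ M * d t := by
    intro t ht
    have hw : 2*|qf γ (O t) (Sp t) (Sm t) - 2| + 2*|qf γ (O t) (Sp t) (Sm t) + 2*Sp t|
        + 3*|n1 t| ≤ M := by
      have h12 := hM t ht
      rw [Real.norm_eq_abs] at h12
      exact le_trans (le_abs_self _) h12
    have h8 := hcross t
    have hDW : D t ≤ (2*|qf γ (O t) (Sp t) (Sm t) - 2| + 2*|qf γ (O t) (Sp t) (Sm t) + 2*Sp t|
        + 3*|n1 t|) * d t := by
      simp only [hD_def, hd_def]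
      nlinarith [le_abs_self (qf γ (O t) (Sp t) (Sm t) - 2),
        le_abs_self (qf γ (O t) (Sp t) (Sm t) + 2*Sp t),
        mul_nonneg (abs_nonneg (qf γ (O t) (Sp t) (Sm t) - 2)) (sq_nonneg (n2 t - n3 t)),
        mul_nonneg (abs_nonneg (qf γ (O t) (Sp t) (Sm t) + 2*Sp t)) (sq_nonneg (Sm t)),
        mul_nonneg (sub_nonneg.2 (le_abs_self (qf γ (O t) (Sp t) (Sm t) - 2))) (sq_nonneg (Sm t)),
        mul_nonneg (sub_nonneg.2 (le_abs_self (qf γ (O t) (Sp t) (Sm t) + 2*Sp t)))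
          (sq_nonneg (n2 t - n3 t)), h8]
    calc D t ≤ _ := hDW
      _ ≤ M * d t := mul_le_mul_of_nonneg_right hw (hd0 t)
  -- d vanishes on [T, 0]
  have hdIcc : ∀ t ∈ Set.Icc T 0, d t = 0 := by
    intro t ht
    have hkey2 : d t * Real.exp (-M*t) ≤ d T * Real.exp (-M*T) := by
      have := aux_le_of_deriv_nonpos (h := fun x => d x * Real.exp (-M*x))
        (h' := fun x => D x * Real.exp (-M*x) + d x * (Real.exp (-M*x) * (-M*1))) ht.1
        (fun x hx => (hdd x (le_trans hx.2 ht.2)).mul ((hasDerivAt_id x).const_mul (-M)).exp)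
        (fun x hx => by
          show D x * Real.exp (-M*x) + d x * (Real.exp (-M*x) * (-M*1)) ≤ 0
          have h13 := hDM x ⟨hx.1, le_trans hx.2 ht.2⟩
          have hE := Real.exp_pos (-M*x)
          nlinarith [mul_le_mul_of_nonneg_right h13 hE.le])
      simpa using this
    have hT' : d T = 0 := hdT T le_rfl
    rw [hT'] at hkey2
    have hE := Real.exp_pos (-M*t)
    have : d t ≤ 0 := by nlinarith [hE]
    exact le_antisymm this (hd0 t)
  -- conclusion
  intro τ hτ
  have hdτ : d τ = 0 := by
    rcases le_or_gt τ T with h|h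
    · exact hdT τ h
    · exact hdIcc τ ⟨h.le, hτ⟩
  simp only [hd_def] at hdτ
  have h1 : Sm τ = 0 := by
    have h14 : Sm τ ^ 2 = 0 := by nlinarith [sq_nonneg (Sm τ), sq_nonneg (n2 τ - n3 τ)]
    exact pow_eq_zero_iff two_ne_zero |>.mp h14
  have h2 : n2 τ = n3 τ := by
    have h15 : (n2 τ - n3 τ) ^ 2 = 0 := by nlinarith [sq_nonneg (Sm τ), sq_nonneg (n2 τ - n3 τ)]
    have := pow_eq_zero_iff two_ne_zero |>.mp h15
    linarith
  exact ⟨h1, h2⟩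


end WainwrightHsu
end
end

section
/- Let 2/3 < γ ≤ 2 and let x be a Bianchi type IX solution of the Wainwright–Hsu system defined (at least) on (−∞, 0]. Then the functions Σ₊, Σ₋ and Ω are bounded on (−∞, 0] (their image is contained in a compact set whose size depends on the initial data). Furthermore, for any τ ≤ 0, if N₃(τ) ≥ N₂(τ) ≥ N₁(τ) and N₃(τ) ≥ 2, then N₂(τ) ≥ N₃(τ)/10. -/
open Real Filter Topology Set

noncomputable section

namespace WainwrightHsu

lemma abs_le_of_sq_le_aux (x C : ℝ) (h1 : x^2 ≤ C) (h2 : 1 ≤ C) : |x| ≤ C := by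
  rw [abs_le]
  constructor <;> nlinarith [sq_nonneg (x + C), sq_nonneg (x - C)]

lemma keymax_aux (a b c P : ℝ) (ha : 0 < a) (hb : 0 < b) (hc : 0 < c)
    (h1 : a ≤ c) (h2 : b ≤ c) (hP : a*b*c ≤ P) :
    2*(a*b+b*c+c*a) - (a^2+b^2+c^2) ≤ 4 + 4*P := by
  rcases le_or_gt (a*b) 1 with h | h
  · nlinarith [sq_nonneg (a+b-c), mul_pos (mul_pos ha hb) hc]
  · have hc1 : 1 < c := by nlinarith
    nlinarith [sq_nonneg (a+b-c), mul_pos ha hb]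

lemma key_aux (a b c P : ℝ) (ha : 0 < a) (hb : 0 < b) (hc : 0 < c) (hP : a*b*c ≤ P) :
    2*(a*b+b*c+c*a) - (a^2+b^2+c^2) ≤ 4 + 4*P := by
  rcases le_total a b with h1 | h1 <;> rcases le_total b c with h2 | h2 <;>
    rcases le_total a c with h3 | h3
  · linarith [keymax_aux a b c P ha hb hc h3 h2 hP]
  · linarith [keymax_aux a b c P ha hb hc (h1.trans h2) h2 hP]
  · linarith [keymax_aux a c b P ha hc hb h1 h2 (by nlinarith)]
  · linarith [keymax_aux a c b P ha hc hb h1 h2 (by nlinarith)]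
  · linarith [keymax_aux a b c P ha hb hc h3 h2 hP]
  · linarith [keymax_aux b c a P hb hc ha h1 h3 (by nlinarith)]
  · linarith [keymax_aux b c a P hb hc ha h1 (h2.trans h1) (by nlinarith)]
  · linarith [keymax_aux b c a P hb hc ha h1 h3 (by nlinarith)]

/-- for a Bianchi IX solution with `2/3 < γ ≤ 2` defined on `(-∞, 0]`, the
functions `Σ₊`, `Σ₋`, `Ω` are bounded there, and whenever `N₃ ≥ N₂ ≥ N₁` and `N₃ ≥ 2`
one has `N₂ ≥ N₃/10`. -/
theorem bianchiIX_shear_bounded_and_N_comparison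
    (γ : ℝ) (hγ1 : 2/3 < γ) (hγ2 : γ ≤ 2)
    (O Sp Sm n1 n2 n3 : ℝ → ℝ)
    (hsol : SolOn γ (Set.Iic 0) O Sp Sm n1 n2 n3)
    (hIX : ∀ τ ∈ Set.Iic (0:ℝ), 0 < n1 τ ∧ 0 < n2 τ ∧ 0 < n3 τ) :
    (∃ C : ℝ, ∀ τ ∈ Set.Iic (0:ℝ), |Sp τ| ≤ C ∧ |Sm τ| ≤ C ∧ |O τ| ≤ C) ∧
    (∀ τ ∈ Set.Iic (0:ℝ), n1 τ ≤ n2 τ → n2 τ ≤ n3 τ → 2 ≤ n3 τ → n3 τ / 10 ≤ n2 τ) := by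
  classical
  have hprodmono : ∀ τ ∈ Set.Iic (0:ℝ), n1 τ * n2 τ * n3 τ ≤ n1 0 * n2 0 * n3 0 := by
    set g : ℝ → ℝ := fun τ => n1 τ * n2 τ * n3 τ with hg
    have hd : ∀ τ ∈ Set.Iic (0:ℝ), HasDerivAt g
        (3 * qf γ (O τ) (Sp τ) (Sm τ) * g τ) τ := by
      intro τ hτ
      have := ((hsol.hn1 τ hτ).mul (hsol.hn2 τ hτ)).mul (hsol.hn3 τ hτ)
      refine this.congr_deriv ?_
      simp only [hg, Pi.mul_apply]
      ring
    have hdnn : ∀ τ ∈ Set.Iic (0:ℝ), 0 ≤ 3 * qf γ (O τ) (Sp τ) (Sm τ) * g τ := by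
      intro τ hτ
      obtain ⟨h1, h2, h3⟩ := hIX τ hτ
      have hq : 0 ≤ qf γ (O τ) (Sp τ) (Sm τ) := by
        have := hsol.hOnn τ hτ
        unfold qf
        nlinarith [sq_nonneg (Sp τ), sq_nonneg (Sm τ)]
      positivity
    have hmono : MonotoneOn g (Set.Iic 0) := by
      apply monotoneOn_of_deriv_nonneg (convex_Iic 0)
      · intro τ hτ; exact (hd τ hτ).continuousAt.continuousWithinAt
      · intro τ hτ
        rw [interior_Iic] at hτ
        exact (hd τ (Iio_subset_Iic_self hτ)).differentiableAt.differentiableWithinAt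
      · intro τ hτ
        rw [interior_Iic] at hτ
        rw [(hd τ (Iio_subset_Iic_self hτ)).deriv]
        exact hdnn τ (Iio_subset_Iic_self hτ)
    intro τ hτ
    exact hmono hτ (le_refl (0:ℝ)) hτ
  set P : ℝ := n1 0 * n2 0 * n3 0 with hPdef
  have hPpos : 0 < P := by
    obtain ⟨h1, h2, h3⟩ := hIX 0 Set.self_mem_Iic
    positivity
  constructor
  · refine ⟨4 + 3 * P, fun τ hτ => ?_⟩
    obtain ⟨h1, h2, h3⟩ := hIX τ hτ
    have hcon := hsol.hcon τ hτ
    unfold Constraint at hcon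
    have hOnn := hsol.hOnn τ hτ
    have hk := key_aux (n1 τ) (n2 τ) (n3 τ) P h1 h2 h3 (hprodmono τ hτ)
    have hsum : O τ + (Sp τ)^2 + (Sm τ)^2 ≤ 4 + 3 * P := by nlinarith
    have hC4 : (4:ℝ) ≤ 4 + 3 * P := by linarith
    refine ⟨?_, ?_, ?_⟩
    · exact abs_le_of_sq_le_aux _ _ (by nlinarith [sq_nonneg (Sm τ)]) (by linarith)
    · exact abs_le_of_sq_le_aux _ _ (by nlinarith [sq_nonneg (Sp τ)]) (by linarith)
    · rw [abs_of_nonneg hOnn]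
      nlinarith [sq_nonneg (Sp τ), sq_nonneg (Sm τ)]
  · intro τ hτ h12 h23 h3
    obtain ⟨hp1, hp2, hp3⟩ := hIX τ hτ
    have hcon := hsol.hcon τ hτ
    unfold Constraint at hcon
    have hOnn := hsol.hOnn τ hτ
    by_contra h
    push_neg at h
    nlinarith [sq_nonneg (Sp τ), sq_nonneg (Sm τ), sq_nonneg (n3 τ - n1 τ - n2 τ),
      mul_pos hp1 (hp1.trans_le h12), sq_nonneg (n3 τ - 2 * n2 τ)]


end WainwrightHsu
end
end

section
/- Let 2/3 < γ ≤ 2 and let x be a solution of the Wainwright–Hsu system of Bianchi type VIII or IX. If x has at least one α-limit point, then lim_{τ→−∞} (N₁N₂N₃)(τ) = 0. -/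
open Real Filter Topology Set

noncomputable section

namespace WainwrightHsu

set_option maxHeartbeats 2000000

lemma incr {G g : ℝ → ℝ} {s t m : ℝ} (hst : s ≤ t)
    (hd : ∀ u ∈ Icc s t, HasDerivAt G (g u) u)
    (hm : ∀ u ∈ Icc s t, m ≤ g u) : m * (t - s) ≤ G t - G s := by
  have H : MonotoneOn (fun u => G u - m * u) (Icc s t) := by
    apply monotoneOn_of_deriv_nonneg (convex_Icc s t)
    · intro u hu
      exact (((hd u hu).sub ((hasDerivAt_id u).const_mul m)).continuousAt).continuousWithinAt
    · intro u hu
      rw [interior_Icc] at hu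
      exact (((hd u (Ioo_subset_Icc_self hu)).sub
        ((hasDerivAt_id u).const_mul m)).differentiableAt).differentiableWithinAt
    · intro u hu
      rw [interior_Icc] at hu
      have h1 : HasDerivAt (fun u => G u - m * u) (g u - m) u := by
        exact ((hd u (Ioo_subset_Icc_self hu)).sub ((hasDerivAt_id u).const_mul m)).congr_deriv (by ring)
      rw [h1.deriv]
      linarith [hm u (Ioo_subset_Icc_self hu)]
  have := H (left_mem_Icc.2 hst) (right_mem_Icc.2 hst) hst
  simp only at this
  nlinarith

lemma tube {x x' : ℝ → (Fin 6 → ℝ)} {p : Fin 6 → ℝ} {M ε T t₀ : ℝ}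
    (hd : ∀ t ∈ Icc t₀ (t₀ + T), HasDerivAt x (x' t) t)
    (hM : ∀ t ∈ Icc t₀ (t₀ + T), dist (x t) p ≤ 1 → ‖x' t‖ ≤ M)
    (hε : dist (x t₀) p ≤ ε)
    (h1 : ε + (M + 1) * T ≤ 1) (hM0 : 0 ≤ M) (hT : 0 ≤ T) :
    ∀ t ∈ Icc t₀ (t₀ + T), dist (x t) p ≤ ε + (M + 1) * (t - t₀) := by
  have hf : ContinuousOn (fun t => dist (x t) p) (Icc t₀ (t₀ + T)) := by
    intro u hu
    have h := (hd u hu).continuousAt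
    have h2 : ContinuousAt (fun t => dist (x t) p) u := h.dist continuousAt_const
    exact h2.continuousWithinAt
  have hB : ∀ u : ℝ, HasDerivAt (fun t => ε + (M + 1) * (t - t₀)) (M + 1) u := by
    intro u
    simpa using (((hasDerivAt_id u).sub_const t₀).const_mul (M + 1)).const_add ε
  have hf' : ∀ t ∈ Ico t₀ (t₀ + T), ∀ r, ‖x' t‖ < r →
      ∃ᶠ z in 𝓝[>] t, slope (fun u => dist (x u) p) t z < r := by
    intro t ht r hr
    have hslope : Tendsto (fun z => ‖slope x t z‖) (𝓝[>] t) (𝓝 ‖x' t‖) := by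
      have h0 : Tendsto (slope x t) (𝓝[≠] t) (𝓝 (x' t)) :=
        hasDerivAt_iff_tendsto_slope.mp (hd t (Ico_subset_Icc_self ht))
      have h1' : Tendsto (slope x t) (𝓝[>] t) (𝓝 (x' t)) :=
        h0.mono_left (nhdsWithin_mono t (fun z hz => ne_of_gt hz))
      exact (continuous_norm.tendsto _).comp h1'
    have hev : ∀ᶠ z in 𝓝[>] t, ‖slope x t z‖ < r :=
      hslope.eventually_lt_const hr
    have hgt : ∀ᶠ z in 𝓝[>] t, t < z := eventually_mem_nhdsWithin
    refine ((hev.and hgt).mono ?_).frequently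
    rintro z ⟨hz1, hz2⟩
    refine lt_of_le_of_lt ?_ hz1
    have h3 : dist (x z) p - dist (x t) p ≤ ‖x z - x t‖ := by
      have h := dist_triangle (x z) (x t) p
      rw [dist_eq_norm (x z) (x t)] at h
      linarith
    have h4 : slope (fun u => dist (x u) p) t z = (dist (x z) p - dist (x t) p) / (z - t) := by
      simp [slope_def_field]
    have h5 : ‖slope x t z‖ = ‖x z - x t‖ / (z - t) := by
      rw [slope]
      rw [norm_smul]
      rw [norm_inv, Real.norm_eq_abs, abs_of_pos (by linarith : (0:ℝ) < z - t), vsub_eq_sub]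
      ring
    rw [h4, h5]
    gcongr <;> first | exact h3 | linarith
  intro t ht
  have bound : ∀ u ∈ Ico t₀ (t₀ + T), dist (x u) p = ε + (M + 1) * (u - t₀) →
      ‖x' u‖ < M + 1 := by
    intro u hu hcontact
    have h6 : dist (x u) p ≤ 1 := by
      rw [hcontact]
      nlinarith [hu.1, hu.2]
    exact lt_of_le_of_lt (hM u (Ico_subset_Icc_self hu) h6) (by linarith)
  exact image_le_of_liminf_slope_right_lt_deriv_boundary (f := fun t => dist (x t) p)
    (f' := fun t => ‖x' t‖) (B := fun t => ε + (M + 1) * (t - t₀)) (B' := fun _ => M + 1)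
    hf hf' (by simpa using hε) hB bound ht


/-- The state vector. -/
def stv (O Sp Sm n1 n2 n3 : ℝ → ℝ) (τ : ℝ) : Fin 6 → ℝ :=
  ![O τ, Sp τ, Sm τ, n1 τ, n2 τ, n3 τ]

/-- The Wainwright–Hsu vector field on `ℝ⁶`. -/
def Vfd (γ : ℝ) (y : Fin 6 → ℝ) : Fin 6 → ℝ :=
  ![(2 * qf γ (y 0) (y 1) (y 2) - (3*γ - 2)) * y 0,
    -(2 - qf γ (y 0) (y 1) (y 2)) * y 1 - 3 * SPf (y 3) (y 4) (y 5),
    -(2 - qf γ (y 0) (y 1) (y 2)) * y 2 - 3 * SMf (y 3) (y 4) (y 5),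
    (qf γ (y 0) (y 1) (y 2) - 4 * y 1) * y 3,
    (qf γ (y 0) (y 1) (y 2) + 2 * y 1 + 2 * Real.sqrt 3 * y 2) * y 4,
    (qf γ (y 0) (y 1) (y 2) + 2 * y 1 - 2 * Real.sqrt 3 * y 2) * y 5]

lemma Vfd_cont (γ : ℝ) : Continuous (Vfd γ) := by
  refine continuous_pi fun i => ?_
  fin_cases i
  · show Continuous fun y : Fin 6 → ℝ =>
      (2 * ((1/2) * (3*γ - 2) * y 0 + 2 * ((y 1)^2 + (y 2)^2)) - (3*γ - 2)) * y 0
    fun_prop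
  · show Continuous fun y : Fin 6 → ℝ =>
      -(2 - ((1/2) * (3*γ - 2) * y 0 + 2 * ((y 1)^2 + (y 2)^2))) * y 1 -
        3 * ((1/2) * ((y 4 - y 5)^2 - y 3 * (2 * y 3 - y 4 - y 5)))
    fun_prop
  · show Continuous fun y : Fin 6 → ℝ =>
      -(2 - ((1/2) * (3*γ - 2) * y 0 + 2 * ((y 1)^2 + (y 2)^2))) * y 2 -
        3 * ((Real.sqrt 3 / 2) * (y 5 - y 4) * (y 3 - y 4 - y 5))
    fun_prop
  · show Continuous fun y : Fin 6 → ℝ =>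
      (((1/2) * (3*γ - 2) * y 0 + 2 * ((y 1)^2 + (y 2)^2)) - 4 * y 1) * y 3
    fun_prop
  · show Continuous fun y : Fin 6 → ℝ =>
      (((1/2) * (3*γ - 2) * y 0 + 2 * ((y 1)^2 + (y 2)^2)) + 2 * y 1 + 2 * Real.sqrt 3 * y 2) * y 4
    fun_prop
  · show Continuous fun y : Fin 6 → ℝ =>
      (((1/2) * (3*γ - 2) * y 0 + 2 * ((y 1)^2 + (y 2)^2)) + 2 * y 1 - 2 * Real.sqrt 3 * y 2) * y 5
    fun_prop

lemma stv_hasDeriv {γ : ℝ} {O Sp Sm n1 n2 n3 : ℝ → ℝ}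
    (hsol : SolOn γ (Set.Iic 0) O Sp Sm n1 n2 n3) :
    ∀ τ ∈ Iic (0:ℝ), HasDerivAt (stv O Sp Sm n1 n2 n3)
      (Vfd γ (stv O Sp Sm n1 n2 n3 τ)) τ := by
  intro τ hτ
  rw [hasDerivAt_pi]
  intro i
  fin_cases i
  · exact hsol.hO τ hτ
  · exact hsol.hSp τ hτ
  · exact hsol.hSm τ hτ
  · exact hsol.hn1 τ hτ
  · exact hsol.hn2 τ hτ
  · exact hsol.hn3 τ hτ

/-- for a Bianchi VIII or IX solution (all `Nᵢ` nonzero) with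
`2/3 < γ ≤ 2` possessing an α-limit point, the product `N₁N₂N₃` tends to zero
as `τ → -∞`. -/
theorem n1n2n3_tendsto_zero
    (γ : ℝ) (hγ1 : 2/3 < γ) (hγ2 : γ ≤ 2)
    (O Sp Sm n1 n2 n3 : ℝ → ℝ)
    (hsol : SolOn γ (Set.Iic 0) O Sp Sm n1 n2 n3)
    (htype : ∀ τ ∈ Set.Iic (0:ℝ), n1 τ ≠ 0 ∧ n2 τ ≠ 0 ∧ n3 τ ≠ 0)
    (hlim : ∃ a b c d e f : ℝ, AlphaLim O Sp Sm n1 n2 n3 a b c d e f) :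
    Tendsto (fun τ => n1 τ * n2 τ * n3 τ) atBot (𝓝 0) := by
  obtain ⟨a, b, c, d, e, f, τs, hτs, hOl, hSpl, hSml, hn1l, hn2l, hn3l⟩ := hlim
  set q : ℝ → ℝ := fun τ => qf γ (O τ) (Sp τ) (Sm τ) with hq_def
  have hq0 : ∀ τ ∈ Iic (0:ℝ), 0 ≤ q τ := by
    intro τ hτ
    have h := hsol.hOnn τ hτ
    simp only [hq_def, qf]
    nlinarith [sq_nonneg (Sp τ), sq_nonneg (Sm τ)]
  set P : ℝ → ℝ := fun τ => n1 τ * n2 τ * n3 τ with hP_def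
  have hPne : ∀ τ ∈ Iic (0:ℝ), P τ ≠ 0 := by
    intro τ hτ
    obtain ⟨h1, h2, h3⟩ := htype τ hτ
    simp only [hP_def]
    exact mul_ne_zero (mul_ne_zero h1 h2) h3
  have hPd : ∀ τ ∈ Iic (0:ℝ), HasDerivAt P (3 * q τ * P τ) τ := by
    intro τ hτ
    have h := ((hsol.hn1 τ hτ).mul (hsol.hn2 τ hτ)).mul (hsol.hn3 τ hτ)
    refine h.congr_deriv ?_
    simp only [hq_def, hP_def, Pi.mul_apply]
    ring
  set G : ℝ → ℝ := fun τ => Real.log (P τ) with hG_def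
  have hGd : ∀ τ ∈ Iic (0:ℝ), HasDerivAt G (3 * q τ) τ := by
    intro τ hτ
    have h := (hPd τ hτ).log (hPne τ hτ)
    convert h using 1
    rw [mul_div_cancel_right₀ _ (hPne τ hτ)]
  have hGmono : MonotoneOn G (Iic (0:ℝ)) := by
    apply monotoneOn_of_deriv_nonneg (convex_Iic 0)
    · intro u hu
      exact (hGd u hu).continuousAt.continuousWithinAt
    · intro u hu
      rw [interior_Iic] at hu
      have hu' : u ∈ Iic (0:ℝ) := mem_Iic.mpr (le_of_lt (mem_Iio.mp hu))
      exact (hGd u hu').differentiableAt.differentiableWithinAt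
    · intro u hu
      rw [interior_Iic] at hu
      have hu' : u ∈ Iic (0:ℝ) := mem_Iic.mpr (le_of_lt (mem_Iio.mp hu))
      rw [(hGd u hu').deriv]
      linarith [hq0 u hu']
  have hPlim : Tendsto (fun k => P (τs k)) atTop (𝓝 (d * e * f)) := (hn1l.mul hn2l).mul hn3l
  have hτs0 : ∀ᶠ k in atTop, τs k ≤ 0 := hτs.eventually (eventually_le_atBot 0)
  have habs : ∀ τ ∈ Iic (0:ℝ), |P τ| = Real.exp (G τ) := by
    intro τ hτ
    simp only [hG_def]
    rw [← Real.log_abs, Real.exp_log (abs_pos.mpr (hPne τ hτ))]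
  by_cases hdef : d * e * f = 0
  · rw [NormedAddCommGroup.tendsto_nhds_zero]
    intro ε hε
    have h1 : ∀ᶠ k in atTop, |P (τs k)| < ε := by
      have h2 : Tendsto (fun k => |P (τs k)|) atTop (𝓝 |d * e * f|) := hPlim.abs
      rw [hdef, abs_zero] at h2
      exact h2.eventually_lt_const hε
    obtain ⟨k, hk1, hk2⟩ := (h1.and hτs0).exists
    rw [eventually_atBot]
    refine ⟨τs k, fun τ hτ => ?_⟩
    have hτ0 : τ ∈ Iic (0:ℝ) := le_trans hτ hk2
    have h3 : G τ ≤ G (τs k) := hGmono hτ0 hk2 hτ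
    have h4 : |P τ| ≤ |P (τs k)| := by
      rw [habs τ hτ0, habs (τs k) hk2]
      exact Real.exp_le_exp.mpr h3
    rw [Real.norm_eq_abs]
    exact lt_of_le_of_lt h4 hk1
  · exfalso
    -- lower bound for G
    have hGk : Tendsto (fun k => G (τs k)) atTop (𝓝 (Real.log (d * e * f))) := by
      have h := (Real.continuousAt_log hdef).tendsto.comp hPlim
      exact h
    set B : ℝ := Real.log (d * e * f) - 1 with hB_def
    have hGkB : ∀ᶠ k in atTop, B ≤ G (τs k) := by
      have h := hGk.eventually_const_lt (show B < Real.log (d * e * f) by simp [hB_def])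
      exact h.mono fun k hk => hk.le
    have hGlow : ∀ τ ∈ Iic (0:ℝ), B ≤ G τ := by
      intro τ hτ
      obtain ⟨k, hk1, hk2⟩ := (hGkB.and (hτs.eventually (eventually_le_atBot τ))).exists
      exact hk1.trans (hGmono (mem_Iic.mpr (hk2.trans hτ)) hτ hk2)
    -- state space picture
    set x : ℝ → (Fin 6 → ℝ) := stv O Sp Sm n1 n2 n3 with hx_def
    set p : Fin 6 → ℝ := ![a, b, c, d, e, f] with hp_def
    have hxp : Tendsto (fun k => x (τs k)) atTop (𝓝 p) := by
      rw [tendsto_pi_nhds]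
      intro i
      fin_cases i
      · exact hOl
      · exact hSpl
      · exact hSml
      · exact hn1l
      · exact hn2l
      · exact hn3l
    have hxd : ∀ τ ∈ Iic (0:ℝ), HasDerivAt x (Vfd γ (x τ)) τ := stv_hasDeriv hsol
    have hVc : Continuous (Vfd γ) := Vfd_cont γ
    obtain ⟨C, hC⟩ := (isCompact_closedBall p 1).exists_bound_of_continuousOn hVc.continuousOn
    set M : ℝ := max C 0 with hM_def
    have hMb : ∀ y : Fin 6 → ℝ, dist y p ≤ 1 → ‖Vfd γ y‖ ≤ M := fun y hy =>
      (hC y (Metric.mem_closedBall.mpr hy)).trans (le_max_left _ _)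
    have hM0 : (0:ℝ) ≤ M := le_max_right _ _
    -- driver
    have driver : ∀ c T : ℝ, 0 < c → 0 < T →
        (∀ᶠ k in atTop, c ≤ G (τs k + T) - G (τs k)) → False := by
      intro c T hc hT hstep
      have key : ∀ n : ℕ, ∃ s, s ≤ (0:ℝ) ∧ G s ≤ G 0 - n * c := by
        intro n
        induction n with
        | zero => exact ⟨0, le_refl 0, by simp⟩
        | succ n ih =>
          obtain ⟨s, hs0, hsG⟩ := ih
          obtain ⟨k, hk1, hk2⟩ := (hstep.and (hτs.eventually (eventually_le_atBot (s - T)))).exists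
          refine ⟨τs k, by linarith, ?_⟩
          have h7 : G (τs k + T) ≤ G s :=
            hGmono (mem_Iic.mpr (by linarith)) (mem_Iic.mpr hs0) (by linarith)
          push_cast
          linarith
      obtain ⟨n, hn⟩ := exists_nat_gt ((G 0 - B) / c)
      obtain ⟨s, hs0, hsG⟩ := key n
      have h8 := hGlow s (mem_Iic.mpr hs0)
      have h9 : G 0 - B < n * c := by
        rw [div_lt_iff₀ hc] at hn
        linarith
      linarith
    -- coordinates of p
    have hpc : p 0 = a ∧ p 1 = b ∧ p 2 = c ∧ p 3 = d ∧ p 4 = e ∧ p 5 = f := by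
      rw [hp_def]
      exact ⟨rfl, rfl, rfl, rfl, rfl, rfl⟩
    obtain ⟨hp0, hp1, hp2, hp3, hp4, hp5⟩ := hpc
    have hMp1 : (0:ℝ) < M + 1 := by linarith
    -- generic tube along the sequence
    have tube' : ∀ ε₀ T : ℝ, 0 < ε₀ → 0 ≤ T → ε₀ + (M+1)*T ≤ 1 →
        ∀ᶠ k in atTop, (τs k + T ≤ 0 ∧
          ∀ u ∈ Icc (τs k) (τs k + T), dist (x u) p ≤ ε₀ + (M+1)*(u - τs k)) := by
      intro ε₀ T hε₀ hT h1
      have h2 : ∀ᶠ k in atTop, dist (x (τs k)) p < ε₀ := Metric.tendsto_nhds.mp hxp ε₀ hε₀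
      have h3 : ∀ᶠ k in atTop, τs k ≤ -T := hτs.eventually (eventually_le_atBot (-T))
      filter_upwards [h2, h3] with k hk2 hk3
      have hsub : Icc (τs k) (τs k + T) ⊆ Iic (0:ℝ) := fun u hu => le_trans hu.2 (by linarith)
      refine ⟨by linarith, ?_⟩
      exact tube (fun t ht => hxd t (hsub ht)) (fun t _ h => hMb (x t) h) hk2.le h1 hM0 hT
    -- the value of q at the limit point
    have hQcc : Continuous (fun y : Fin 6 → ℝ => qf γ (y 0) (y 1) (y 2)) := by
      unfold qf
      fun_prop
    have hQcx : ∀ τ, qf γ (x τ 0) (x τ 1) (x τ 2) = q τ := by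
      intro τ
      rw [hq_def, hx_def]
      rfl
    have ha0 : 0 ≤ a := ge_of_tendsto hOl (hτs0.mono fun k hk => hsol.hOnn _ hk)
    have hQp : qf γ (p 0) (p 1) (p 2) = 0 := by
      by_contra hne
      have hQnn : 0 ≤ qf γ (p 0) (p 1) (p 2) := by
        rw [hp0, hp1, hp2]
        unfold qf
        nlinarith [sq_nonneg b, sq_nonneg c]
      have hqpos : 0 < qf γ (p 0) (p 1) (p 2) := lt_of_le_of_ne hQnn (Ne.symm hne)
      obtain ⟨δ₁, hδ₁pos, hδ₁⟩ := Metric.continuousAt_iff.mp hQcc.continuousAt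
        (qf γ (p 0) (p 1) (p 2) / 2) (by linarith)
      set δ : ℝ := min δ₁ 1 with hδ_def
      have hδpos : 0 < δ := lt_min hδ₁pos one_pos
      have hδ1 : δ ≤ 1 := min_le_right _ _
      have hδδ₁ : δ ≤ δ₁ := min_le_left _ _
      set T : ℝ := δ/(4*(M+1)) with hT_def
      have hTpos : 0 < T := by positivity
      have hMT : (M+1)*T = δ/4 := by
        rw [hT_def]
        field_simp
      have hstep : ∀ᶠ k in atTop,
          3 * (qf γ (p 0) (p 1) (p 2) / 2) * T ≤ G (τs k + T) - G (τs k) := by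
        filter_upwards [tube' (δ/4) T (by positivity) hTpos.le (by rw [hMT]; linarith)]
          with k hk
        obtain ⟨hk0, hktube⟩ := hk
        have hqb : ∀ u ∈ Icc (τs k) (τs k + T), 3 * (qf γ (p 0) (p 1) (p 2) / 2) ≤ 3 * q u := by
          intro u hu
          have hd1 : dist (x u) p ≤ δ/2 := by
            have := hktube u hu
            have h5 : (M+1)*(u - τs k) ≤ (M+1)*T := by
              apply mul_le_mul_of_nonneg_left _ hMp1.le
              linarith [hu.2]
            rw [hMT] at h5
            linarith
          have hd2 : dist (x u) p < δ₁ := lt_of_le_of_lt hd1 (by linarith)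
          have := hδ₁ hd2
          rw [Real.dist_eq, hQcx u] at this
          have h6 := abs_lt.mp this
          linarith [h6.1]
        have := incr (by linarith : τs k ≤ τs k + T)
          (fun u hu => hGd u (mem_Iic.mpr (le_trans hu.2 hk0))) hqb
        linarith [this]
      exact driver _ T (by positivity) hTpos hstep
    have habc : a = 0 ∧ b = 0 ∧ c = 0 := by
      rw [hp0, hp1, hp2] at hQp
      unfold qf at hQp
      have ha' : a = 0 := by
        have hle : a ≤ 0 := by nlinarith only [hQp, sq_nonneg b, sq_nonneg c, ha0, hγ1]
        linarith only [hle, ha0]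
      have hbc : b^2 + c^2 = 0 := by
        rw [ha'] at hQp
        linarith only [hQp]
      have hb' : b = 0 := by
        have h : b^2 = 0 := by linarith only [hbc, sq_nonneg b, sq_nonneg c]
        exact (pow_eq_zero_iff two_ne_zero).mp h
      have hc' : c = 0 := by
        have h : c^2 = 0 := by linarith only [hbc, sq_nonneg b, sq_nonneg c]
        exact (pow_eq_zero_iff two_ne_zero).mp h
      exact ⟨ha', hb', hc'⟩
    -- the curvature terms vanish at the limit point
    have side : ∀ (W S : ℝ → ℝ) (F : (Fin 6 → ℝ) → ℝ) (j : Fin 6),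
        Continuous F → (∀ τ, S τ = F (x τ)) → (∀ τ, W τ = x τ j) → p j = 0 →
        (∀ τ ∈ Iic (0:ℝ), HasDerivAt W (-(2 - q τ) * W τ - 3 * S τ) τ) →
        (∀ τ ∈ Iic (0:ℝ), 2 * (W τ)^2 ≤ q τ) → F p = 0 := by
      intro W S F j hFc hSF hWx hpj hWd hWq
      by_contra hS0
      set σ : ℝ := |F p| with hσ_def
      have hσpos : 0 < σ := abs_pos.mpr hS0
      obtain ⟨δ₁, hδ₁pos, hδ₁⟩ := Metric.continuousAt_iff.mp hFc.continuousAt (σ/4) (by positivity)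
      obtain ⟨δ₂, hδ₂pos, hδ₂⟩ := Metric.continuousAt_iff.mp hQcc.continuousAt 1 one_pos
      set δ : ℝ := min (min δ₁ δ₂) (min 1 (σ/12)) with hδ_def
      have hδpos : 0 < δ := lt_min (lt_min hδ₁pos hδ₂pos) (lt_min one_pos (by positivity))
      have hδ1 : δ ≤ 1 := le_trans (min_le_right _ _) (min_le_left _ _)
      have hδσ : δ ≤ σ/12 := le_trans (min_le_right _ _) (min_le_right _ _)
      have hδδ₁ : δ ≤ δ₁ := le_trans (min_le_left _ _) (min_le_left _ _)
      have hδδ₂ : δ ≤ δ₂ := le_trans (min_le_left _ _) (min_le_right _ _)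
      set T : ℝ := δ/(4*(M+1)) with hT_def
      have hTpos : 0 < T := by positivity
      have hMT : (M+1)*T = δ/4 := by
        rw [hT_def]
        field_simp
      set ε₀ : ℝ := min (δ/4) (σ*T/4) with hε₀_def
      have hε₀pos : 0 < ε₀ := lt_min (by positivity) (by positivity)
      have hε₀δ : ε₀ ≤ δ/4 := min_le_left _ _
      have hε₀σ : ε₀ ≤ σ*T/4 := min_le_right _ _
      set c₁ : ℝ := 3 * (2 * ((3/4)*σ*T)^2) * (T/2) with hc₁_def
      have hc₁pos : 0 < c₁ := by positivity
      have hstep : ∀ᶠ k in atTop, c₁ ≤ G (τs k + T) - G (τs k) := by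
        filter_upwards [tube' ε₀ T hε₀pos hTpos.le (by rw [hMT]; linarith),
          Metric.tendsto_nhds.mp hxp ε₀ hε₀pos] with k hk hkd
        obtain ⟨hk0, hktube⟩ := hk
        have hIic : ∀ u ∈ Icc (τs k) (τs k + T), u ∈ Iic (0:ℝ) :=
          fun u hu => le_trans hu.2 hk0
        have htube2 : ∀ u ∈ Icc (τs k) (τs k + T), dist (x u) p ≤ δ/2 := by
          intro u hu
          have h5 : (M+1)*(u - τs k) ≤ (M+1)*T := by
            apply mul_le_mul_of_nonneg_left _ hMp1.le
            linarith [hu.2]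
          rw [hMT] at h5
          linarith [hktube u hu]
        have hWb : ∀ u ∈ Icc (τs k) (τs k + T), |W u| ≤ δ/2 := by
          intro u hu
          have h5 := dist_le_pi_dist (x u) p j
          rw [Real.dist_eq] at h5
          rw [hWx u]
          calc |x u j| = |x u j - p j| := by rw [hpj, sub_zero]
          _ ≤ dist (x u) p := h5
          _ ≤ δ/2 := htube2 u hu
        have hqb : ∀ u ∈ Icc (τs k) (τs k + T), |q u| ≤ 1 := by
          intro u hu
          have h5 : dist (x u) p < δ₂ := lt_of_le_of_lt (htube2 u hu) (by linarith)
          have h6 := hδ₂ h5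
          rw [Real.dist_eq, hQcx u, hQp, sub_zero] at h6
          exact h6.le
        have hSb : ∀ u ∈ Icc (τs k) (τs k + T), |S u - F p| ≤ σ/4 := by
          intro u hu
          have h5 : dist (x u) p < δ₁ := lt_of_le_of_lt (htube2 u hu) (by linarith)
          have h6 := hδ₁ h5
          rw [Real.dist_eq] at h6
          rw [hSF u]
          exact h6.le
        have hder : ∀ u ∈ Icc (τs k) (τs k + T),
            |(-(2 - q u) * W u - 3 * S u) + 3 * F p| ≤ σ := by
          intro u hu
          have h1 := hWb u hu
          have h2 := hqb u hu
          have h3 := hSb u hu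
          have e1 : -(2 - q u) * W u - 3 * S u + 3 * F p
              = (-(2 - q u)) * W u + (-3) * (S u - F p) := by ring
          rw [e1]
          calc |(-(2 - q u)) * W u + (-3) * (S u - F p)|
              ≤ |(-(2 - q u)) * W u| + |(-3) * (S u - F p)| := abs_add_le _ _
          _ = |(-(2 - q u))| * |W u| + 3 * |S u - F p| := by
              rw [abs_mul, abs_mul]
              norm_num
          _ ≤ 3 * (δ/2) + 3 * (σ/4) := by
              have h4 : |(-(2 - q u))| ≤ 3 := by
                rw [abs_neg]
                rw [abs_of_nonneg (by linarith [abs_le.mp h2] : (0:ℝ) ≤ 2 - q u)]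
                linarith [abs_le.mp h2]
              have h5 : (0:ℝ) ≤ |W u| := abs_nonneg _
              nlinarith only [h1, h3, h4, h5, abs_nonneg (S u - F p)]
          _ ≤ σ := by linarith
        -- |W| is large on the second half interval
        have hW0 : |W (τs k)| ≤ ε₀ := by
          have h5 := dist_le_pi_dist (x (τs k)) p j
          rw [Real.dist_eq] at h5
          rw [hWx (τs k)]
          calc |x (τs k) j| = |x (τs k) j - p j| := by rw [hpj, sub_zero]
          _ ≤ dist (x (τs k)) p := h5
          _ ≤ ε₀ := hkd.le
        have hWlarge : ∀ u ∈ Icc (τs k + T/2) (τs k + T), 2 * ((3/4)*σ*T)^2 ≤ q u := by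
          intro u hu
          have humem : u ∈ Icc (τs k) (τs k + T) := ⟨by linarith [hu.1], hu.2⟩
          have hsubi : Icc (τs k) u ⊆ Icc (τs k) (τs k + T) :=
            fun v hv => ⟨hv.1, le_trans hv.2 humem.2⟩
          have hlow : (-3 * F p - σ) * (u - τs k) ≤ W u - W (τs k) := by
            apply incr humem.1 (fun v hv => hWd v (hIic v (hsubi hv)))
            intro v hv
            have := abs_le.mp (hder v (hsubi hv))
            linarith [this.1]
          have hup : W u - W (τs k) ≤ (-3 * F p + σ) * (u - τs k) := by
            have h7 : (3 * F p - σ) * (u - τs k) ≤ (-W u) - (-W (τs k)) := by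
              apply incr humem.1
              · intro v hv
                exact ((hWd v (hIic v (hsubi hv))).neg)
              · intro v hv
                have := abs_le.mp (hder v (hsubi hv))
                linarith [this.2]
            nlinarith only [h7]
          have ht1 : T/2 ≤ u - τs k := by linarith [hu.1]
          have ht2 : u - τs k ≤ T := by linarith [hu.2]
          have habsW : (3/4)*σ*T ≤ |W u| := by
            have hprod : σ * (u - τs k) = F p * (u - τs k) ∨
                σ * (u - τs k) = -(F p * (u - τs k)) := by
              rcases abs_cases (F p) with ⟨hFp, _⟩ | ⟨hFp, _⟩
              · left; rw [hσ_def, hFp]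
              · right; rw [hσ_def, hFp]; ring
            have hpr2 : σ * (T/2) ≤ σ * (u - τs k) :=
              mul_le_mul_of_nonneg_left ht1 hσpos.le
            have hW0' := abs_le.mp hW0
            rcases hprod with hpr | hpr
            · -- σ = F p ≥ 0, W decreases
              have h8 : W u ≤ ε₀ - 2*σ*(u - τs k) := by
                linarith only [hup, hW0'.2, hpr]
              have h9 : W u ≤ -(3/4)*σ*T := by
                linarith only [h8, hε₀σ, hpr2]
              calc (3/4)*σ*T ≤ -W u := by linarith only [h9]
              _ ≤ |W u| := neg_le_abs _
            · -- σ = -F p, W increases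
              have h8 : -ε₀ + 2*σ*(u - τs k) ≤ W u := by
                linarith only [hlow, hW0'.1, hpr]
              have h9 : (3/4)*σ*T ≤ W u := by
                linarith only [h8, hε₀σ, hpr2]
              exact le_trans h9 (le_abs_self _)
          have h10 := hWq u (hIic u humem)
          have hsq : ((3/4)*σ*T)*((3/4)*σ*T) ≤ |W u| * |W u| :=
            mul_self_le_mul_self (by positivity) habsW
          nlinarith only [hsq, h10, sq_abs (W u)]
        have hincr2 : 3 * (2 * ((3/4)*σ*T)^2) * (T/2) ≤ G (τs k + T) - G (τs k + T/2) := by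
          have h11 := incr (by linarith : τs k + T/2 ≤ τs k + T)
            (fun u hu => hGd u (hIic u ⟨by linarith [hu.1], hu.2⟩))
            (fun u hu => by
              have h12 := hWlarge u hu
              show 3 * (2 * ((3/4)*σ*T)^2) ≤ 3 * q u
              linarith only [h12])
          calc 3 * (2 * ((3/4)*σ*T)^2) * (T/2)
              = 3 * (2 * ((3/4)*σ*T)^2) * ((τs k + T) - (τs k + T/2)) := by ring_nf
          _ ≤ _ := h11
        have hmono2 : G (τs k) ≤ G (τs k + T/2) :=
          hGmono (mem_Iic.mpr (by linarith)) (mem_Iic.mpr (by linarith)) (by linarith)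
        calc c₁ = 3 * (2 * ((3/4)*σ*T)^2) * (T/2) := hc₁_def
        _ ≤ G (τs k + T) - G (τs k + T/2) := hincr2
        _ ≤ G (τs k + T) - G (τs k) := by linarith
      exact driver c₁ T hc₁pos hTpos hstep
    -- apply the side argument to Σ₊ and Σ₋
    have hSPp : SPf (p 3) (p 4) (p 5) = 0 := by
      have h := side Sp (fun τ => SPf (n1 τ) (n2 τ) (n3 τ))
        (fun y => SPf (y 3) (y 4) (y 5)) 1
        (by unfold SPf; fun_prop)
        (fun τ => by rw [hx_def]; rfl)
        (fun τ => by rw [hx_def]; rfl)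
        (by rw [hp1, habc.2.1])
        (fun τ hτ => by rw [hq_def]; exact hsol.hSp τ hτ)
        (fun τ hτ => by
          rw [hq_def]
          show 2 * (Sp τ)^2 ≤ qf γ (O τ) (Sp τ) (Sm τ)
          unfold qf
          nlinarith only [hsol.hOnn τ hτ, sq_nonneg (Sm τ), hγ1])
      exact h
    have hSMp : SMf (p 3) (p 4) (p 5) = 0 := by
      have h := side Sm (fun τ => SMf (n1 τ) (n2 τ) (n3 τ))
        (fun y => SMf (y 3) (y 4) (y 5)) 2
        (by unfold SMf; fun_prop)
        (fun τ => by rw [hx_def]; rfl)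
        (fun τ => by rw [hx_def]; rfl)
        (by rw [hp2, habc.2.2])
        (fun τ hτ => by rw [hq_def]; exact hsol.hSm τ hτ)
        (fun τ hτ => by
          rw [hq_def]
          show 2 * (Sm τ)^2 ≤ qf γ (O τ) (Sp τ) (Sm τ)
          unfold qf
          nlinarith only [hsol.hOnn τ hτ, sq_nonneg (Sp τ), hγ1])
      exact h
    rw [hp3, hp4, hp5] at hSPp hSMp
    -- the constraint holds at the limit point
    have hconk : ∀ᶠ k in atTop, O (τs k) + Sp (τs k)^2 + Sm (τs k)^2 +
        (3/4) * (n1 (τs k)^2 + n2 (τs k)^2 + n3 (τs k)^2 -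
          2*(n1 (τs k)*n2 (τs k) + n2 (τs k)*n3 (τs k) + n3 (τs k)*n1 (τs k))) = 1 :=
      hτs0.mono fun k hk => hsol.hcon _ hk
    have hlhs : Tendsto (fun k => O (τs k) + Sp (τs k)^2 + Sm (τs k)^2 +
        (3/4) * (n1 (τs k)^2 + n2 (τs k)^2 + n3 (τs k)^2 -
          2*(n1 (τs k)*n2 (τs k) + n2 (τs k)*n3 (τs k) + n3 (τs k)*n1 (τs k)))) atTop
        (𝓝 (a + b^2 + c^2 + (3/4) * (d^2 + e^2 + f^2 - 2*(d*e + e*f + f*d)))) := by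
      exact ((hOl.add (hSpl.pow 2)).add (hSml.pow 2)).add
        (((((hn1l.pow 2).add (hn2l.pow 2)).add (hn3l.pow 2)).sub
          ((((hn1l.mul hn2l).add (hn2l.mul hn3l)).add (hn3l.mul hn1l)).const_mul 2)).const_mul (3/4))
    have hcp : a + b^2 + c^2 + (3/4) * (d^2 + e^2 + f^2 - 2*(d*e + e*f + f*d)) = 1 :=
      tendsto_nhds_unique hlhs (tendsto_const_nhds.congr' (hconk.mono fun k hk => hk.symm))
    obtain ⟨ha', hb', hc'⟩ := habc
    rw [ha', hb', hc'] at hcp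
    -- nondegeneracy of the limit point
    have hd0 : d ≠ 0 := fun h => hdef (by rw [h]; ring)
    have he0 : e ≠ 0 := fun h => hdef (by rw [h]; ring)
    have hf0 : f ≠ 0 := fun h => hdef (by rw [h]; ring)
    -- SMf d e f = 0 gives (f - e) * (d - e - f) = 0
    have hfe : (f - e) * (d - e - f) = 0 := by
      unfold SMf at hSMp
      rcases mul_eq_zero.mp hSMp with h | h
      · rcases mul_eq_zero.mp h with h' | h'
        · exact absurd h' (by positivity)
        · rw [h']; ring
      · rw [h]; ring
    rcases mul_eq_zero.mp hfe with h | h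
    · -- f = e
      have hef : f = e := by linarith only [h]
      rw [hef] at hSPp hcp
      unfold SPf at hSPp
      have h4 : d * (d - e) = 0 := by linear_combination (-1 : ℝ) * hSPp
      rcases mul_eq_zero.mp h4 with h5 | h5
      · exact hd0 h5
      · have hde : d = e := by linarith only [h5]
        rw [hde] at hcp
        nlinarith only [hcp, sq_nonneg e]
    · -- d = e + f
      have hd' : d = e + f := by linarith only [h]
      rw [hd'] at hSPp
      unfold SPf at hSPp
      have h5 : e * f = 0 := by linear_combination (-1/2 : ℝ) * hSPp
      rcases mul_eq_zero.mp h5 with h6 | h6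
      · exact he0 h6
      · exact hf0 h6


end WainwrightHsu
end
end

section
/- Let γ = 2. There exists α₀ > 0 such that for every Bianchi type IX solution of the Wainwright–Hsu system, every time τ ≤ 0 in its existence interval, and every α with 0 < α ≤ α₀: if (N₁N₂N₃)(τ) ≤ α, then q(τ) − 2 ≤ 4·α^{1/3}. -/
open Real Filter Topology Set

noncomputable section

namespace WainwrightHsu

/-!
For `γ = 2` the deceleration parameter is `q = 2(Ω + Σ₊² + Σ₋²)`, so the constraint gives
`q - 2 = -(3/2)(N₁² + N₂² + N₃² - 2(N₁N₂ + N₂N₃ + N₃N₁))`. Schur's inequality for the numbers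
`Nᵢ^(2/3)`, followed by AM-GM, bounds this quadratic form below by `-3(N₁N₂N₃)^(2/3)`. Hence
`q - 2 ≤ (9/2) α^(2/3)`, which is at most `4 α^(1/3)` as long as `α^(1/3) ≤ 8/9`.
-/

theorem schur_inequality {x y z : ℝ} (hx : 0 ≤ x) (hy : 0 ≤ y) (hz : 0 ≤ z) :
    x * y * (x + y) + y * z * (y + z) + z * x * (z + x) ≤
      x ^ 3 + y ^ 3 + z ^ 3 + 3 * (x * y * z) := by
  rcases le_total x y with hxy | hxy <;> rcases le_total y z with hyz | hyz <;>
    rcases le_total x z with hxz | hxz <;>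
    nlinarith [mul_nonneg hx (sq_nonneg (x - y)), mul_nonneg hy (sq_nonneg (y - z)),
      mul_nonneg hz (sq_nonneg (x - z)), mul_nonneg hx (sq_nonneg (x - z)),
      mul_nonneg hy (sq_nonneg (x - y)), mul_nonneg hz (sq_nonneg (y - z)),
      mul_nonneg (mul_nonneg hx hy) hz]

theorem two_mul_sum_cube_mul_cube_le (a b c : ℝ) :
    2 * (a ^ 3 * b ^ 3 + b ^ 3 * c ^ 3 + c ^ 3 * a ^ 3) ≤
      a ^ 6 + b ^ 6 + c ^ 6 + 3 * (a * b * c) ^ 2 := by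
  have schur := schur_inequality (sq_nonneg a) (sq_nonneg b) (sq_nonneg c)
  nlinarith [mul_nonneg (mul_nonneg (sq_nonneg a) (sq_nonneg b)) (sq_nonneg (a - b)),
    mul_nonneg (mul_nonneg (sq_nonneg b) (sq_nonneg c)) (sq_nonneg (b - c)),
    mul_nonneg (mul_nonneg (sq_nonneg c) (sq_nonneg a)) (sq_nonneg (c - a))]

theorem rpow_one_div_three_pow_three {x : ℝ} (hx : 0 ≤ x) : (x ^ ((1 : ℝ) / 3)) ^ 3 = x := by
  rw [← Real.rpow_natCast, ← Real.rpow_mul hx]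
  norm_num

theorem neg_three_mul_cbrt_sq_le {x y z : ℝ} (hx : 0 ≤ x) (hy : 0 ≤ y) (hz : 0 ≤ z) :
    -(3 * ((x * y * z) ^ ((1 : ℝ) / 3)) ^ 2) ≤
      x ^ 2 + y ^ 2 + z ^ 2 - 2 * (x * y + y * z + z * x) := by
  have key := two_mul_sum_cube_mul_cube_le (x ^ ((1 : ℝ) / 3)) (y ^ ((1 : ℝ) / 3))
    (z ^ ((1 : ℝ) / 3))
  rw [Real.mul_rpow (by positivity) hz, Real.mul_rpow hx hy]
  rw [rpow_one_div_three_pow_three hx, rpow_one_div_three_pow_three hy,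
    rpow_one_div_three_pow_three hz] at key
  have pow_six {w : ℝ} (hw : 0 ≤ w) : (w ^ ((1 : ℝ) / 3)) ^ 6 = w ^ 2 := by
    rw [show 6 = 3 * 2 by rfl, pow_mul, rpow_one_div_three_pow_three hw]
  rw [pow_six hx, pow_six hy, pow_six hz] at key
  linarith

theorem qf_two_sub_two_eq {O Sp Sm n1 n2 n3 : ℝ} (h : Constraint O Sp Sm n1 n2 n3) :
    qf 2 O Sp Sm - 2 =
      -(3 / 2) * (n1 ^ 2 + n2 ^ 2 + n3 ^ 2 - 2 * (n1 * n2 + n2 * n3 + n3 * n1)) := by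
  unfold Constraint at h
  unfold qf
  linarith

theorem qf_two_sub_two_le {O Sp Sm n1 n2 n3 : ℝ} (h : Constraint O Sp Sm n1 n2 n3)
    (h1 : 0 ≤ n1) (h2 : 0 ≤ n2) (h3 : 0 ≤ n3) :
    qf 2 O Sp Sm - 2 ≤ 9 / 2 * ((n1 * n2 * n3) ^ ((1 : ℝ) / 3)) ^ 2 := by
  rw [qf_two_sub_two_eq h]
  linarith [neg_three_mul_cbrt_sq_le h1 h2 h3]

/-- in the stiff fluid case `γ = 2`, there is `α₀ > 0` such that for any
Bianchi IX solution, any `τ ≤ 0` and any `0 < α ≤ α₀`, if `(N₁N₂N₃)(τ) ≤ α` then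
`q(τ) - 2 ≤ 4 α^(1/3)`. -/
theorem stiff_q_estimate :
    ∃ α₀ > (0:ℝ), ∀ (O Sp Sm n1 n2 n3 : ℝ → ℝ),
      SolOn 2 (Set.Iic 0) O Sp Sm n1 n2 n3 →
      (∀ τ ∈ Set.Iic (0:ℝ), 0 < n1 τ ∧ 0 < n2 τ ∧ 0 < n3 τ) →
      ∀ τ ∈ Set.Iic (0:ℝ), ∀ α : ℝ, 0 < α → α ≤ α₀ →
        n1 τ * n2 τ * n3 τ ≤ α →
        qf 2 (O τ) (Sp τ) (Sm τ) - 2 ≤ 4 * α ^ ((1:ℝ)/3) := by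
  refine ⟨(8 / 9) ^ 3, by norm_num, ?_⟩
  intro O Sp Sm n1 n2 n3 hsol hpos τ hτ α hα hα₀ hprod
  obtain ⟨h1, h2, h3⟩ := hpos τ hτ
  have hcbrt : (n1 τ * n2 τ * n3 τ) ^ ((1 : ℝ) / 3) ≤ α ^ ((1 : ℝ) / 3) :=
    Real.rpow_le_rpow (by positivity) hprod (by norm_num)
  have hcbrt_nonneg : 0 ≤ α ^ ((1 : ℝ) / 3) := Real.rpow_nonneg hα.le _
  have hcbrt_le : α ^ ((1 : ℝ) / 3) ≤ 8 / 9 := by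
    have := Real.rpow_le_rpow hα.le hα₀ (show (0 : ℝ) ≤ 1 / 3 by norm_num)
    rw [← Real.rpow_natCast, ← Real.rpow_mul (by norm_num)] at this
    norm_num at this
    exact this
  calc qf 2 (O τ) (Sp τ) (Sm τ) - 2
      ≤ 9 / 2 * ((n1 τ * n2 τ * n3 τ) ^ ((1 : ℝ) / 3)) ^ 2 :=
        qf_two_sub_two_le (hsol.hcon τ hτ) h1.le h2.le h3.le
    _ ≤ 9 / 2 * (α ^ ((1 : ℝ) / 3)) ^ 2 := by gcongr
    _ ≤ 4 * α ^ ((1 : ℝ) / 3) := by nlinarith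

end WainwrightHsu
end
end

section
/- Let γ = 2 and let x be any solution of the Wainwright–Hsu system with Ω > 0. Then ω(τ) = Ω(τ)^{1/2} converges as τ → −∞ to a limit ω₀ with ω₀ > 0. -/
open Real Filter Topology Set

noncomputable section

namespace WainwrightHsu

/-- in the stiff fluid case `γ = 2` with `Ω > 0`, the quantity
`ω = Ω^(1/2)` converges as `τ → -∞` to a positive limit. -/
theorem stiff_omega_converges
    (O Sp Sm n1 n2 n3 : ℝ → ℝ)
    (hsol : SolOn 2 (Set.Iic 0) O Sp Sm n1 n2 n3)
    (hOpos : ∀ τ ∈ Set.Iic (0:ℝ), 0 < O τ) :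
    ∃ ω₀ : ℝ, 0 < ω₀ ∧ Tendsto (fun τ => Real.sqrt (O τ)) atBot (𝓝 ω₀) := by
  obtain ⟨hn1, hn2, hn3, hSp, hSm, hO, hOnn, hcon⟩ := hsol
  set K : ℝ → ℝ := fun τ => 1 - O τ - (Sp τ)^2 - (Sm τ)^2 with hKdef
  clear_value K
  -- Ω' = -4 K Ω
  have hO' : ∀ τ ∈ Iic (0:ℝ), HasDerivAt O (-4 * K τ * O τ) τ := by
    intro τ hτ
    convert hO τ hτ using 1
    simp only [hKdef, qf]
    ring
  -- derivative of N₁N₂N₃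
  have hPd : ∀ τ ∈ Iic (0:ℝ), HasDerivAt (fun t => n1 t * n2 t * n3 t)
      ((6 - 6*K τ) * (n1 τ * n2 τ * n3 τ)) τ := by
    intro τ hτ
    refine (((hn1 τ hτ).mul (hn2 τ hτ)).mul (hn3 τ hτ)).congr_deriv ?_
    simp only [hKdef, qf, Pi.mul_apply]
    ring
  -- conserved quantity
  have hg : ∀ τ ∈ Iic (0:ℝ), HasDerivAt
      (fun t => (n1 t * n2 t * n3 t)^2 / (Real.exp (12*t) * O t^3)) 0 τ := by
    intro τ hτ
    have hnum : HasDerivAt (fun t => (n1 t * n2 t * n3 t)^2)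
        (2*(n1 τ * n2 τ * n3 τ)*((6 - 6*K τ) * (n1 τ * n2 τ * n3 τ))) τ := by
      have := (hPd τ hτ).pow 2
      refine this.congr_deriv ?_
      push_cast; ring
    have h12 : HasDerivAt (fun t : ℝ => 12*t) 12 τ := by
      simpa using (hasDerivAt_id τ).const_mul (12:ℝ)
    have hO3 : HasDerivAt (fun t => O t^3) (3 * O τ^2 * (-4 * K τ * O τ)) τ := by
      have := (hO' τ hτ).pow 3
      refine this.congr_deriv ?_
      push_cast; ring
    have hden : HasDerivAt (fun t => Real.exp (12*t) * O t^3)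
        (Real.exp (12*τ) * 12 * O τ^3 + Real.exp (12*τ) * (3 * O τ^2 * (-4 * K τ * O τ))) τ :=
      h12.exp.mul hO3
    have hOne : O τ ≠ 0 := (hOpos τ hτ).ne'
    have hdenne : Real.exp (12*τ) * O τ^3 ≠ 0 := by positivity
    have := hnum.div hden hdenne
    refine this.congr_deriv ?_
    field_simp
    ring
  -- constancy
  have hOne0 : O 0 ≠ 0 := (hOpos 0 (by simp : (0:ℝ) ∈ Iic (0:ℝ))).ne'
  have hGconst : ∀ τ ≤ (0:ℝ), (n1 τ * n2 τ * n3 τ)^2 / (Real.exp (12*τ) * O τ^3)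
      = (n1 0 * n2 0 * n3 0)^2 / (Real.exp (12*0) * O 0^3) := by
    intro τ hτ
    have hcont : ContinuousOn
        (fun t => (n1 t * n2 t * n3 t)^2 / (Real.exp (12*t) * O t^3)) (Icc τ 0) :=
      fun x hx => (hg x hx.2).continuousAt.continuousWithinAt
    have h := constant_of_has_deriv_right_zero hcont
      (fun x hx => (hg x (le_of_lt hx.2)).hasDerivWithinAt)
    exact (h 0 (right_mem_Icc.mpr hτ)).symm
  set c : ℝ := (n1 0 * n2 0 * n3 0)^2 / (O 0)^3 with hcdef
  clear_value c
  have hc0 : 0 ≤ c := by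
    rw [hcdef]
    have := hOpos 0 (by simp : (0:ℝ) ∈ Iic (0:ℝ))
    positivity
  have hPsq : ∀ τ ≤ (0:ℝ), (n1 τ * n2 τ * n3 τ)^2 = c * Real.exp (12*τ) * O τ^3 := by
    intro τ hτ
    have h := hGconst τ hτ
    have hOne : O τ ≠ 0 := (hOpos τ hτ).ne'
    rw [hcdef]
    rw [mul_zero, Real.exp_zero, one_mul] at h
    field_simp at h ⊢
    linear_combination h
  -- β
  set β : ℝ := 3 * c ^ ((3:ℕ):ℝ)⁻¹ with hβdef
  clear_value β
  have hβ0 : 0 ≤ β := by rw [hβdef]; positivity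
  have hβ3 : β^3 = 27 * c := by
    have h3 : (c ^ ((3:ℕ):ℝ)⁻¹)^(3:ℕ) = c := Real.rpow_inv_natCast_pow hc0 (by norm_num)
    calc β^3 = 27 * (c ^ ((3:ℕ):ℝ)⁻¹)^(3:ℕ) := by rw [hβdef]; ring
    _ = 27 * c := by rw [h3]
  -- the key pointwise estimate
  have hstar : ∀ τ ≤ (0:ℝ), -K τ ≤ β * Real.exp (4*τ) * O τ := by
    intro τ hτ
    rcases le_or_gt (-K τ) 0 with h | h
    · have : (0:ℝ) ≤ β * Real.exp (4*τ) * O τ := by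
        have := (hOpos τ hτ).le
        positivity
      linarith
    · have hKq : K τ = (3/4) * ((n1 τ)^2 + (n2 τ)^2 + (n3 τ)^2
          - 2*(n1 τ*n2 τ + n2 τ*n3 τ + n3 τ*n1 τ)) := by
        have := hcon τ hτ
        unfold Constraint at this
        simp only [hKdef]
        linarith
      have h1 : -K τ ≤ 3 * (n2 τ * n3 τ) := by nlinarith [sq_nonneg (n1 τ - n2 τ - n3 τ)]
      have h2 : -K τ ≤ 3 * (n1 τ * n3 τ) := by nlinarith [sq_nonneg (n2 τ - n1 τ - n3 τ)]
      have h3 : -K τ ≤ 3 * (n1 τ * n2 τ) := by nlinarith [sq_nonneg (n3 τ - n1 τ - n2 τ)]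
      have hA : (-K τ) * (-K τ) ≤ (3 * (n1 τ * n2 τ)) * (3 * (n2 τ * n3 τ)) :=
        mul_le_mul h3 h1 h.le (by linarith)
      have hp1 : (0:ℝ) < 3 * (n1 τ * n2 τ) := lt_of_lt_of_le h h3
      have hp2 : (0:ℝ) < 3 * (n2 τ * n3 τ) := lt_of_lt_of_le h h1
      have hB : (-K τ) * (-K τ) * (-K τ)
          ≤ (3 * (n1 τ * n2 τ)) * (3 * (n2 τ * n3 τ)) * (3 * (n1 τ * n3 τ)) :=
        mul_le_mul hA h2 h.le (mul_pos hp1 hp2).le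
      have hcube : (-K τ)^3 ≤ (β * Real.exp (4*τ) * O τ)^3 := by
        have hexp3 : Real.exp (4*τ)^3 = Real.exp (12*τ) := by
          rw [← Real.exp_nat_mul]
          norm_num
          ring
        have hP2 := hPsq τ hτ
        have e1 : (β * Real.exp (4*τ) * O τ)^3 = 27 * c * Real.exp (12*τ) * O τ^3 := by
          calc (β * Real.exp (4*τ) * O τ)^3 = β^3 * Real.exp (4*τ)^3 * O τ^3 := by ring
          _ = 27 * c * Real.exp (12*τ) * O τ^3 := by rw [hβ3, hexp3]
        calc (-K τ)^3 = (-K τ) * (-K τ) * (-K τ) := by ring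
        _ ≤ (3 * (n1 τ * n2 τ)) * (3 * (n2 τ * n3 τ)) * (3 * (n1 τ * n3 τ)) := hB
        _ = 27 * (n1 τ * n2 τ * n3 τ)^2 := by ring
        _ = 27 * (c * Real.exp (12*τ) * O τ^3) := by rw [hP2]
        _ = (β * Real.exp (4*τ) * O τ)^3 := by rw [e1]; ring
      by_contra hcon2
      push_neg at hcon2
      have hnn : (0:ℝ) ≤ β * Real.exp (4*τ) * O τ := by
        have := (hOpos τ hτ).le; positivity
      have := pow_lt_pow_left₀ hcon2 hnn (by norm_num : 3 ≠ 0)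
      linarith
  -- choice of T
  set T : ℝ := min 0 (Real.log ((2*β+1)⁻¹) / 4) with hTdef
  have hT0 : T ≤ 0 := min_le_left _ _
  have hTb : ∀ τ ≤ T, β * Real.exp (4*τ) ≤ 1/2 := by
    intro τ hτ
    have h4 : 4*τ ≤ Real.log ((2*β+1)⁻¹) := by
      have := hτ.trans (min_le_right 0 (Real.log ((2*β+1)⁻¹) / 4))
      linarith
    have hinvpos : (0:ℝ) < (2*β+1)⁻¹ := by positivity
    have hee : Real.exp (4*τ) ≤ (2*β+1)⁻¹ := by
      rw [← Real.exp_log hinvpos]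
      exact Real.exp_le_exp.mpr h4
    calc β * Real.exp (4*τ) ≤ β * (2*β+1)⁻¹ := by
          exact mul_le_mul_of_nonneg_left hee hβ0
    _ ≤ 1/2 := by
          rw [← div_eq_mul_inv, div_le_iff₀ (by positivity)]
          linarith
  -- Ω ≤ 2 on (-∞, T]
  have hO2 : ∀ τ ≤ T, O τ ≤ 2 := by
    intro τ hτ
    have hτ0 : τ ≤ 0 := hτ.trans hT0
    have hs := hstar τ hτ0
    have hb := hTb τ hτ
    have hOn := hOnn τ hτ0
    have h1 : β * Real.exp (4*τ) * O τ ≤ (1/2) * O τ :=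
      mul_le_mul_of_nonneg_right hb hOn
    have hKτ : O τ = 1 - (Sp τ)^2 - (Sm τ)^2 - K τ := by
      rw [hKdef]; ring
    nlinarith [sq_nonneg (Sp τ), sq_nonneg (Sm τ)]
  -- the monotone function H
  set H : ℝ → ℝ := fun τ => Real.log (O τ) - 2*β*Real.exp (4*τ) with hHdef
  have hH' : ∀ τ ∈ Iic (0:ℝ), HasDerivAt H (-4 * K τ - 8*β*Real.exp (4*τ)) τ := by
    intro τ hτ
    have hl := (hO' τ hτ).log (hOpos τ hτ).ne'
    have hl2 : HasDerivAt (fun t => Real.log (O t)) (-4 * K τ) τ := by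
      convert hl using 1
      field_simp [(hOpos τ hτ).ne']
    have h4 : HasDerivAt (fun t : ℝ => 4*t) 4 τ := by
      simpa using (hasDerivAt_id τ).const_mul (4:ℝ)
    have he : HasDerivAt (fun t : ℝ => 2*β*Real.exp (4*t)) (8*β*Real.exp (4*τ)) τ := by
      have := (h4.exp).const_mul (2*β)
      refine this.congr_deriv ?_
      ring
    rw [hHdef]
    exact hl2.sub he
  have hHanti : AntitoneOn H (Iic T) := by
    apply antitoneOn_of_deriv_nonpos (convex_Iic T)
    · exact fun x hx => (hH' x ((hx : x ≤ T).trans hT0)).continuousAt.continuousWithinAt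
    · intro x hx
      rw [interior_Iic] at hx
      exact ((hH' x ((le_of_lt hx).trans hT0)).differentiableAt).differentiableWithinAt
    · intro x hx
      rw [interior_Iic] at hx
      have hx0 : x ≤ 0 := (le_of_lt hx).trans hT0
      rw [(hH' x hx0).deriv]
      have hs := hstar x hx0
      have hb := hTb x (le_of_lt hx)
      have h2 := hO2 x (le_of_lt hx)
      have he : (0:ℝ) ≤ β * Real.exp (4*x) := by positivity
      nlinarith [mul_le_mul_of_nonneg_left h2 he]
  -- bounded above
  have hHub : ∀ τ ≤ T, H τ ≤ Real.log 2 := by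
    intro τ hτ
    have hτ0 : τ ≤ 0 := hτ.trans hT0
    have hlog : Real.log (O τ) ≤ Real.log 2 :=
      Real.log_le_log (hOpos τ hτ0) (hO2 τ hτ)
    have : (0:ℝ) ≤ 2*β*Real.exp (4*τ) := by positivity
    rw [hHdef]
    dsimp only
    linarith
  -- pass to the limit
  set F : ℝ → ℝ := fun t => H (min t T) with hFdef
  have hFanti : Antitone F := by
    intro a b hab
    exact hHanti (min_le_right a T) (min_le_right b T) (min_le_min hab le_rfl)
  have hFbdd : BddAbove (range F) := by
    refine ⟨Real.log 2, ?_⟩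
    rintro x ⟨t, rfl⟩
    exact hHub (min t T) (min_le_right t T)
  have hFtend : Tendsto F atBot (𝓝 (⨆ t, F t)) := tendsto_atBot_ciSup hFanti hFbdd
  set L : ℝ := ⨆ t, F t with hLdef
  have hHF : F =ᶠ[atBot] H := by
    filter_upwards [eventually_le_atBot T] with t ht
    rw [hFdef]
    simp [min_eq_left ht]
  have hHtend : Tendsto H atBot (𝓝 L) := hFtend.congr' hHF
  have hexp0 : Tendsto (fun t : ℝ => 2*β*Real.exp (4*t)) atBot (𝓝 0) := by
    have h1 : Tendsto (fun t : ℝ => (4:ℝ)*t) atBot atBot :=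
      tendsto_id.const_mul_atBot (by norm_num)
    have h2 : Tendsto (fun t : ℝ => Real.exp (4*t)) atBot (𝓝 0) :=
      Real.tendsto_exp_atBot.comp h1
    have := h2.const_mul (2*β)
    simpa using this
  have hlogO : Tendsto (fun t => Real.log (O t)) atBot (𝓝 L) := by
    have heq : (fun t => Real.log (O t)) = fun t => H t + 2*β*Real.exp (4*t) := by
      funext t
      rw [hHdef]
      ring
    rw [heq]
    simpa using hHtend.add hexp0
  have hOt : Tendsto O atBot (𝓝 (Real.exp L)) := by
    have h1 : Tendsto (fun t => Real.exp (Real.log (O t))) atBot (𝓝 (Real.exp L)) :=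
      (Real.continuous_exp.tendsto L).comp hlogO
    apply h1.congr'
    filter_upwards [eventually_le_atBot (0:ℝ)] with t ht
    exact Real.exp_log (hOpos t ht)
  refine ⟨Real.sqrt (Real.exp L), Real.sqrt_pos.mpr (Real.exp_pos L), ?_⟩
  exact (Real.continuous_sqrt.tendsto (Real.exp L)).comp hOt


end WainwrightHsu
end
end
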